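/- arXiv:1707.00853 — 7 statements merged into one kernel-verified Lean document; each statement's English description precedes it below -/
import Mathlib

section
/- Three distinct points of the Grassmannian G(2,5) of lines in P^4 correspond to lines in special position with respect to 2-planes (i.e. every 2-plane meeting two of them also meets the third) if and only if the three lines lie in a common 2-plane and all pass through a common point. -/
open Module

/-- Lines in `ℙ⁴` are modelled as 2-dimensional linear subspaces of `ℂ⁵`, and 2-planes as
3-dimensional linear subspaces.  A family of lines is in *special position* with respect to
2-planes if every 2-plane meeting all the lines but one also meets the remaining one. -/
def SpecialPosition {n : ℕ} (l : Fin n → Submodule ℂ (Fin 5 → ℂ)) : Prop :=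
  ∀ i : Fin n, ∀ Λ : Submodule ℂ (Fin 5 → ℂ), finrank ℂ Λ = 3 →
    (∀ j : Fin n, j ≠ i → Λ ⊓ l j ≠ ⊥) → Λ ⊓ l i ≠ ⊥

/-!
The special position condition holds for every subspace `A`, not only for 2-planes: a subspace
missing the line `l i` can be enlarged to a complement of `l i`, which is a 2-plane.

If `q ∈ l j` lies off `l i`, then every `p ∈ l k` lies in the plane spanned by `l i` and
`q`, since otherwise the line `qp` would meet `l j` and `l k` but miss `l i`. Hence `l k` meets
`l i` and lies in the plane `l i + l j`, and the point `l i ∩ l j` lies on `l k` by the extended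
condition. Conversely, if the lines lie in a plane `Λ₀` and pass through a point `P`, a 2-plane
`Λ` meets `Λ₀` either in a line, which meets `l i` inside `Λ₀`, or in a single point; in the
second case that point lies on two of the lines, so it is `P`.
-/

namespace Submodule

variable {K V : Type*} [Field K] [AddCommGroup V] [Module K V] [FiniteDimensional K V]

theorem eq_of_le_of_ne_bot_of_finrank_le_one {S T : Submodule K V} (hST : S ≤ T) (hS : S ≠ ⊥)
    (hT : finrank K T ≤ 1) : S = T :=
  eq_of_le_of_finrank_le hST (hT.trans (one_le_finrank_iff.mpr hS))

theorem finrank_inf_le_one_of_ne {s t : Submodule K V} (hs : finrank K s = 2)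
    (ht : finrank K t = 2) (hst : s ≠ t) : finrank K (s ⊓ t : Submodule K V) ≤ 1 := by
  by_contra! h
  have hs' : s ⊓ t = s := eq_of_le_of_finrank_le inf_le_left (by omega)
  have ht' : s ⊓ t = t := eq_of_le_of_finrank_le inf_le_right (by omega)
  exact hst (hs'.symm.trans ht')

theorem inf_ne_bot_of_finrank_lt_add {A B C : Submodule K V} (hA : A ≤ C) (hB : B ≤ C)
    (h : finrank K C < finrank K A + finrank K B) : A ⊓ B ≠ ⊥ := by
  rw [← one_le_finrank_iff]
  have hsum := finrank_sup_add_finrank_inf_eq A B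
  have hsup := finrank_mono (sup_le hA hB)
  omega

theorem exists_mem_notMem_of_finrank_eq {s t : Submodule K V} (h : finrank K s = finrank K t)
    (hst : s ≠ t) : ∃ x ∈ s, x ∉ t := by
  by_contra! hle
  exact hst (eq_of_le_of_finrank_eq hle h)

end Submodule

open Submodule

theorem Fin.eq_or_eq_of_ne_of_three :
    ∀ {i j k m : Fin 3}, i ≠ j → i ≠ k → j ≠ k → m ≠ i → m = j ∨ m = k := by
  decide

theorem Fin.exists_ne_ne_of_three :
    ∀ i : Fin 3, ∃ j k : Fin 3, i ≠ j ∧ i ≠ k ∧ j ≠ k := by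
  decide

namespace SpecialPosition

theorem inf_ne_bot {n : ℕ} {l : Fin n → Submodule ℂ (Fin 5 → ℂ)} (h : SpecialPosition l)
    {i : Fin n} (hi : finrank ℂ (l i) = 2) {A : Submodule ℂ (Fin 5 → ℂ)}
    (hA : ∀ j, j ≠ i → A ⊓ l j ≠ ⊥) : A ⊓ l i ≠ ⊥ := by
  intro hAi
  obtain ⟨C, hAC, hC⟩ := (disjoint_iff.mpr hAi).exists_isCompl
  have hC3 : finrank ℂ C = 3 := by
    have hsum := finrank_add_eq_of_isCompl hC
    rw [hi, finrank_fin_fun] at hsum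
    omega
  exact h i C hC3 (fun j hj ↦ ne_bot_of_le_ne_bot (hA j hj) (inf_le_inf_right _ hAC))
    hC.inf_eq_bot

variable {l : Fin 3 → Submodule ℂ (Fin 5 → ℂ)} {i j k : Fin 3}

theorem le_sup_span_singleton (h : SpecialPosition l) (hi : finrank ℂ (l i) = 2) (hij : i ≠ j)
    (hik : i ≠ k) (hjk : j ≠ k) {q : Fin 5 → ℂ} (hq : q ∈ l j) (hqi : q ∉ l i) :
    l k ≤ l i ⊔ ℂ ∙ q := by
  intro p hp
  by_contra hpq
  have hdisj : Disjoint (l i) (ℂ ∙ q ⊔ ℂ ∙ p) :=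
    (disjoint_span_singleton_of_notMem hqi).disjoint_sup_right_of_disjoint_sup_left
      (disjoint_span_singleton_of_notMem hpq)
  refine h.inf_ne_bot hi (fun m hm ↦ ?_) (disjoint_iff.mp hdisj.symm)
  rcases Fin.eq_or_eq_of_ne_of_three hij hik hjk hm with rfl | rfl
  · exact (Submodule.ne_bot_iff _).mpr ⟨q, ⟨mem_sup_left (mem_span_singleton_self q), hq⟩,
      (ne_of_mem_of_not_mem (zero_mem _) hqi).symm⟩
  · exact (Submodule.ne_bot_iff _).mpr ⟨p, ⟨mem_sup_right (mem_span_singleton_self p), hp⟩,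
      (ne_of_mem_of_not_mem (zero_mem _) hpq).symm⟩

theorem le_sup (h : SpecialPosition l) (hl : ∀ i, finrank ℂ (l i) = 2)
    (hd : Function.Injective l) (hij : i ≠ j) (hik : i ≠ k) (hjk : j ≠ k) :
    l k ≤ l i ⊔ l j := by
  obtain ⟨q, hq, hqi⟩ :=
    exists_mem_notMem_of_finrank_eq ((hl j).trans (hl i).symm) (hd.ne hij.symm)
  exact (h.le_sup_span_singleton (hl i) hij hik hjk hq hqi).trans
    (sup_le_sup_left ((span_singleton_le_iff_mem q _).mpr hq) _)

theorem finrank_inf_eq_one (h : SpecialPosition l) (hl : ∀ i, finrank ℂ (l i) = 2)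
    (hd : Function.Injective l) (hij : i ≠ j) (hik : i ≠ k) (hjk : j ≠ k) :
    finrank ℂ (l i ⊓ l k : Submodule ℂ (Fin 5 → ℂ)) = 1 := by
  obtain ⟨q, hq, hqi⟩ :=
    exists_mem_notMem_of_finrank_eq ((hl j).trans (hl i).symm) (hd.ne hij.symm)
  have hsup : finrank ℂ (l i ⊔ l k : Submodule ℂ (Fin 5 → ℂ)) ≤ 3 :=
    calc finrank ℂ (l i ⊔ l k : Submodule ℂ (Fin 5 → ℂ))
        ≤ finrank ℂ (l i ⊔ ℂ ∙ q : Submodule ℂ (Fin 5 → ℂ)) :=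
          finrank_mono (sup_le le_sup_left (h.le_sup_span_singleton (hl i) hij hik hjk hq hqi))
      _ = 3 := by rw [finrank_sup_span_singleton hqi, hl i]
  have hinf := finrank_inf_le_one_of_ne (hl i) (hl k) (hd.ne hik)
  have hsum := finrank_sup_add_finrank_inf_eq (l i) (l k)
  rw [hl i, hl k] at hsum
  omega

theorem inf_le (h : SpecialPosition l) (hl : ∀ i, finrank ℂ (l i) = 2)
    (hd : Function.Injective l) (hij : i ≠ j) (hik : i ≠ k) (hjk : j ≠ k) :
    l i ⊓ l j ≤ l k := by
  have hij1 := h.finrank_inf_eq_one hl hd hik hij hjk.symm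
  have hne : l i ⊓ l j ≠ ⊥ := one_le_finrank_iff.mp hij1.ge
  have hmeet : (l i ⊓ l j) ⊓ l k ≠ ⊥ := by
    refine h.inf_ne_bot (hl k) fun m hm ↦ ?_
    rcases Fin.eq_or_eq_of_ne_of_three hik.symm hjk.symm hij hm with rfl | rfl
    · rwa [inf_eq_left.mpr inf_le_left]
    · rwa [inf_eq_left.mpr inf_le_right]
  exact inf_eq_left.mp (eq_of_le_of_ne_bot_of_finrank_le_one inf_le_left hmeet hij1.le)

end SpecialPosition

theorem specialPosition_of_coplanar_of_concurrent {l : Fin 3 → Submodule ℂ (Fin 5 → ℂ)}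
    (hl : ∀ i, finrank ℂ (l i) = 2) (hd : Function.Injective l)
    {Λ₀ P : Submodule ℂ (Fin 5 → ℂ)} (hΛ₀ : finrank ℂ Λ₀ = 3) (hlΛ₀ : ∀ i, l i ≤ Λ₀)
    (hP : finrank ℂ P = 1) (hPl : ∀ i, P ≤ l i) : SpecialPosition l := by
  intro i Λ hΛ hmeet
  obtain ⟨j, k, hij, hik, hjk⟩ := Fin.exists_ne_ne_of_three i
  rcases le_or_gt (finrank ℂ (Λ ⊓ Λ₀ : Submodule ℂ (Fin 5 → ℂ))) 1 with hT | hT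
  · have hTj : Λ ⊓ l j = Λ ⊓ Λ₀ := eq_of_le_of_ne_bot_of_finrank_le_one
      (inf_le_inf_left Λ (hlΛ₀ j)) (hmeet j hij.symm) hT
    have hTk : Λ ⊓ l k = Λ ⊓ Λ₀ := eq_of_le_of_ne_bot_of_finrank_le_one
      (inf_le_inf_left Λ (hlΛ₀ k)) (hmeet k hik.symm) hT
    have hPjk : P = l j ⊓ l k := eq_of_le_of_ne_bot_of_finrank_le_one (le_inf (hPl j) (hPl k))
      (one_le_finrank_iff.mp hP.ge) (finrank_inf_le_one_of_ne (hl j) (hl k) (hd.ne hjk))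
    have hTi : Λ ⊓ Λ₀ ≤ l i :=
      calc Λ ⊓ Λ₀ ≤ l j ⊓ l k := le_inf (hTj ▸ inf_le_right) (hTk ▸ inf_le_right)
        _ = P := hPjk.symm
        _ ≤ l i := hPl i
    exact ne_bot_of_le_ne_bot (hTj ▸ hmeet j hij.symm) (le_inf inf_le_left hTi)
  · refine ne_bot_of_le_ne_bot ?_ (inf_le_inf_right (l i) (inf_le_left : Λ ⊓ Λ₀ ≤ Λ))
    exact inf_ne_bot_of_finrank_lt_add inf_le_right (hlΛ₀ i) (by rw [hΛ₀, hl i]; omega)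

/-- Three distinct lines in `ℙ⁴` are in special position with respect to 2-planes iff they
lie in a common 2-plane and all pass through a common point. -/
theorem three_lines_special_position_iff
    (l : Fin 3 → Submodule ℂ (Fin 5 → ℂ))
    (hl : ∀ i, finrank ℂ (l i) = 2)
    (hd : Function.Injective l) :
    SpecialPosition l ↔
      ((∃ Λ : Submodule ℂ (Fin 5 → ℂ), finrank ℂ Λ = 3 ∧ ∀ i, l i ≤ Λ) ∧
       (∃ P : Submodule ℂ (Fin 5 → ℂ), finrank ℂ P = 1 ∧ ∀ i, P ≤ l i)) := by
  refine ⟨fun h ↦ ?_, fun ⟨⟨Λ₀, hΛ₀, hlΛ₀⟩, ⟨P, hP, hPl⟩⟩ ↦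
    specialPosition_of_coplanar_of_concurrent hl hd hΛ₀ hlΛ₀ hP hPl⟩
  have hinf := h.finrank_inf_eq_one hl hd (i := 0) (j := 2) (k := 1) (by decide) (by decide)
    (by decide)
  have hsum := finrank_sup_add_finrank_inf_eq (l 0) (l 1)
  rw [hinf, hl 0, hl 1] at hsum
  refine ⟨⟨l 0 ⊔ l 1, by omega, fun m ↦ ?_⟩, ⟨l 0 ⊓ l 1, hinf, fun m ↦ ?_⟩⟩ <;> fin_cases m
  · exact le_sup_left
  · exact le_sup_right
  · exact h.le_sup hl hd (by decide) (by decide) (by decide)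
  · exact inf_le_left
  · exact inf_le_right
  · exact h.inf_le hl hd (by decide) (by decide) (by decide)
end

section
/- Four distinct lines in P^4 that are in special position with respect to 2-planes are necessarily contained in a common 3-plane (hyperplane) of P^4. -/
open Module

section AuxiliaryLemmas

open Submodule

set_option linter.unusedSectionVars false

variable {K : Type*} [Field K] {V : Type*} [AddCommGroup V] [Module K V]

/-- permuting an independent triple -/
lemma li_perm {v : Fin 3 → V} (h : LinearIndependent K v) (σ : Equiv.Perm (Fin 3)) :
    LinearIndependent K (v ∘ σ) := h.comp σ σ.injective

lemma li_swap01 {a b c : V} (h : LinearIndependent K ![b, a, c]) :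
    LinearIndependent K ![a, b, c] := by
  have := li_perm h (Equiv.swap 0 1)
  convert this using 1
  ext i
  fin_cases i <;> simp [Equiv.swap_apply_of_ne_of_ne]

lemma li_cycle {a b c : V} (h : LinearIndependent K ![c, a, b]) :
    LinearIndependent K ![a, b, c] := by
  have := li_perm h (finRotate 3)
  convert this using 1
  ext i
  fin_cases i <;> simp

lemma range_pair (b c : V) : Set.range ![b, c] = {b, c} := by
  ext x
  simp [Fin.exists_fin_two, or_comm]

/-- building an independent triple from an independent pair -/
lemma li_triple {a b c : V} (hbc : LinearIndependent K ![b, c])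
    (ha : a ∉ span K {b, c}) : LinearIndependent K ![a, b, c] := by
  have : ![a, b, c] = Fin.cons a ![b, c] := by
    ext i; fin_cases i <;> rfl
  rw [this, linearIndependent_fin_cons]
  exact ⟨hbc, by rwa [range_pair]⟩

lemma li_pair_of_triple {u v w : V} (h : LinearIndependent K ![u, v, w]) :
    LinearIndependent K ![u, v] := by
  rw [LinearIndependent.pair_iff]
  intro s t hst
  have := Fintype.linearIndependent_iff.mp h ![s, t, 0]
  simp [Fin.sum_univ_three, hst] at this
  exact ⟨by simpa using this 0, by simpa using this 1⟩

lemma range_triple (b z c : V) : Set.range ![b, z, c] = {b, z, c} := by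
  ext x
  constructor
  · rintro ⟨i, rfl⟩; fin_cases i <;> simp
  · rintro (rfl | rfl | rfl)
    exacts [⟨0, rfl⟩, ⟨1, rfl⟩, ⟨2, rfl⟩]

lemma finrank_span_pair {b z : V} (h : LinearIndependent K ![b, z]) :
    finrank K (span K {b, z} : Submodule K V) = 2 := by
  rw [← range_pair]
  rw [finrank_span_eq_card h]
  simp

lemma aux_pair [FiniteDimensional K V] {X Y : Submodule K V} (hX : X ≠ ⊥) (hY : Y ≠ ⊥)
    (h : ∀ x ∈ X, ∀ y ∈ Y, ¬ LinearIndependent K ![x, y]) :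
    X = Y ∧ finrank K X = 1 := by
  obtain ⟨x0, hx0, hx0ne⟩ := Submodule.exists_mem_ne_zero_of_ne_bot hX
  obtain ⟨y0, hy0, hy0ne⟩ := Submodule.exists_mem_ne_zero_of_ne_bot hY
  have hXle : X ≤ K ∙ y0 := by
    intro x hx
    rcases eq_or_ne x 0 with rfl | hxne
    · exact zero_mem _
    · have := h x hx y0 hy0
      rw [LinearIndependent.pair_iff' hxne] at this
      push_neg at this
      obtain ⟨a, ha⟩ := this
      have hane : a ≠ 0 := by rintro rfl; simp at ha; exact hy0ne ha.symm
      rw [Submodule.mem_span_singleton]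
      exact ⟨a⁻¹, by rw [← ha, smul_smul, inv_mul_cancel₀ hane, one_smul]⟩
  have hYle : Y ≤ K ∙ x0 := by
    intro y hy
    have := h x0 hx0 y hy
    rw [LinearIndependent.pair_iff' hx0ne] at this
    push_neg at this
    obtain ⟨a, ha⟩ := this
    rw [Submodule.mem_span_singleton]
    exact ⟨a, ha⟩
  have hx1 : finrank K (K ∙ x0) = 1 := finrank_span_singleton hx0ne
  have hy1 : finrank K (K ∙ y0) = 1 := finrank_span_singleton hy0ne
  have hXr : 1 ≤ finrank K X := by
    by_contra hc
    push_neg at hc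
    interval_cases h : finrank K X
    exact hX (Submodule.finrank_eq_zero.mp h)
  have hYr : 1 ≤ finrank K Y := by
    by_contra hc
    push_neg at hc
    interval_cases h : finrank K Y
    exact hY (Submodule.finrank_eq_zero.mp h)
  have hXeq : X = K ∙ y0 := eq_of_le_of_finrank_le hXle (by omega)
  have hYeq : Y = K ∙ x0 := eq_of_le_of_finrank_le hYle (by omega)
  have : (K ∙ y0) = K ∙ x0 := by
    apply eq_of_le_of_finrank_le _ (by omega)
    rw [Submodule.span_singleton_le_iff_mem]
    exact hYeq ▸ hy0
  rw [hXeq, hYeq, this, hx1]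
  exact ⟨rfl, rfl⟩

/-- If `![u,v,w]` is independent, `a = g₀•u + g₁•v + g₂•w` with `g₂ ≠ 0`,
then `![a,u,v]` is independent. -/
lemma aux_third {u v w a : V} (h : LinearIndependent K ![u, v, w]) {g : Fin 3 → K}
    (hg : g 0 • u + g 1 • v + g 2 • w = a) (h2 : g 2 ≠ 0) :
    LinearIndependent K ![a, u, v] := by
  apply li_triple (li_pair_of_triple h)
  intro hmem
  rw [Submodule.mem_span_pair] at hmem
  obtain ⟨p, q, hpq⟩ := hmem
  have hz : (g 0 - p) • u + (g 1 - q) • v + g 2 • w = 0 := by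
    rw [sub_smul, sub_smul]
    rw [← hg] at hpq
    abel_nf
    abel_nf at hpq
    linear_combination (norm := module) -hpq
  have := Fintype.linearIndependent_iff.mp h ![g 0 - p, g 1 - q, g 2]
  simp only [Fin.sum_univ_three] at this
  have := this (by simpa using hz) 2
  simp at this
  exact h2 this

lemma aux_two_planes [FiniteDimensional K V] (hV : finrank K V = 3)
    {A B C : Submodule K V} (hA : A ≠ ⊥) (hB : finrank K B = 2) (hC : finrank K C = 2)
    (hBC : B ⊔ C = ⊤) :
    ∃ a ∈ A, ∃ b ∈ B, ∃ c ∈ C, LinearIndependent K ![a, b, c] := by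
  -- the line of intersection
  have hinf : finrank K (B ⊓ C : Submodule K V) = 1 := by
    have := Submodule.finrank_sup_add_finrank_inf_eq B C
    rw [hBC, hB, hC, finrank_top] at this
    omega
  obtain ⟨z, hzBC, hzne⟩ : ∃ z ∈ B ⊓ C, z ≠ 0 := by
    have : (B ⊓ C : Submodule K V) ≠ ⊥ := by
      intro hbot; rw [hbot] at hinf; simp at hinf
    exact Submodule.exists_mem_ne_zero_of_ne_bot this
  obtain ⟨hzB, hzC⟩ := hzBC
  -- b ∈ B outside the line
  obtain ⟨b, hbB, hbz⟩ : ∃ b ∈ B, b ∉ K ∙ z := by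
    by_contra hc
    push_neg at hc
    have hle : B ≤ K ∙ z := hc
    have := Submodule.finrank_mono hle
    rw [hB, finrank_span_singleton hzne] at this
    omega
  -- c ∈ C outside B
  obtain ⟨c, hcC, hcB⟩ : ∃ c ∈ C, c ∉ B := by
    by_contra hc
    push_neg at hc
    have : B ⊔ C = B := sup_eq_left.mpr hc
    rw [this] at hBC
    rw [hBC, finrank_top, hV] at hB
    omega
  have hbne : b ≠ 0 := fun h => hbz (h ▸ zero_mem _)
  have hcne : c ≠ 0 := fun h => hcB (h ▸ zero_mem _)
  -- z, c independent
  have hzc : LinearIndependent K ![z, c] := by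
    rw [LinearIndependent.pair_iff' hzne]
    intro a ha
    exact hcB (ha ▸ Submodule.smul_mem B a hzB)
  -- b ∉ span {z, c}
  have hbzc : b ∉ span K {z, c} := by
    intro hmem
    rw [Submodule.mem_span_pair] at hmem
    obtain ⟨p, q, hpq⟩ := hmem
    have hq : q = 0 := by
      by_contra hqne
      apply hcB
      have : c = q⁻¹ • (b - p • z) := by
        rw [← hpq, add_sub_cancel_left, smul_smul, inv_mul_cancel₀ hqne, one_smul]
      rw [this]
      exact Submodule.smul_mem B _ (Submodule.sub_mem B hbB (Submodule.smul_mem B p hzB))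
    apply hbz
    rw [Submodule.mem_span_singleton]
    exact ⟨p, by rw [← hpq, hq]; simp⟩
  have hbzctriple : LinearIndependent K ![b, z, c] := li_triple hzc hbzc
  -- span {b, z, c} = ⊤
  have hspan : span K {b, z, c} = ⊤ := by
    have hBle : B ≤ span K {b, z, c} := by
      have hsub : span K {b, z} ≤ B := by
        rw [Submodule.span_le]
        rintro x (rfl | rfl) <;> assumption
      have hbz2 : finrank K (span K {b, z} : Submodule K V) = 2 := by
        have hbzli : LinearIndependent K ![b, z] := by
          rw [LinearIndependent.pair_iff' hbne]
          intro a ha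
          apply hbz
          rcases eq_or_ne a 0 with rfl | hane
          · simp at ha; exact absurd ha.symm hzne
          · rw [Submodule.mem_span_singleton]
            exact ⟨a⁻¹, by rw [← ha, smul_smul, inv_mul_cancel₀ hane, one_smul]⟩
        exact finrank_span_pair hbzli
      have : span K {b, z} = B := eq_of_le_of_finrank_eq hsub (by rw [hbz2, hB])
      rw [← this]
      apply Submodule.span_mono
      intro x hx
      rcases hx with rfl | rfl
      · exact Set.mem_insert _ _
      · exact Set.mem_insert_of_mem _ (Set.mem_insert _ _)
    have hCle : C ≤ span K {b, z, c} := by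
      have hsub : span K {z, c} ≤ C := by
        rw [Submodule.span_le]
        rintro x (rfl | rfl) <;> assumption
      have hzc2 : finrank K (span K {z, c} : Submodule K V) = 2 :=
        finrank_span_pair hzc
      have : span K {z, c} = C := eq_of_le_of_finrank_eq hsub (by rw [hzc2, hC])
      rw [← this]
      apply Submodule.span_mono
      intro x hx
      rcases hx with rfl | rfl
      · exact Set.mem_insert_of_mem _ (Set.mem_insert _ _)
      · exact Set.mem_insert_of_mem _ (Set.mem_insert_of_mem _ rfl)
    rw [← top_le_iff, ← hBC]
    exact sup_le hBle hCle
  -- pick a ∈ A nonzero and decompose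
  obtain ⟨a, haA, hane⟩ := Submodule.exists_mem_ne_zero_of_ne_bot hA
  have hamem : a ∈ span K (Set.range ![b, z, c]) := by
    rw [range_triple, hspan]; trivial
  rw [mem_span_range_iff_exists_fun] at hamem
  obtain ⟨g, hg⟩ := hamem
  simp only [Fin.sum_univ_three] at hg
  simp only [Matrix.cons_val_zero, Matrix.cons_val_one, Matrix.head_cons, Matrix.cons_val_two, Matrix.tail_cons] at hg
  rcases eq_or_ne (g 1) 0 with h1 | h1
  · rcases eq_or_ne (g 2) 0 with h2 | h2
    · -- then g 0 ≠ 0; use triple (a, z, c)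
      have h0 : g 0 ≠ 0 := by
        rintro h0
        apply hane
        rw [← hg, h0, h1, h2]; simp
      have hczb : LinearIndependent K ![z, c, b] := by
        have := li_perm hbzctriple (finRotate 3)
        convert this using 1
        ext i; fin_cases i <;> simp
      have : LinearIndependent K ![a, z, c] :=
        aux_third hczb (g := ![g 1, g 2, g 0]) (by simpa using by rw [← hg]; module) (by simpa using h0)
      exact ⟨a, haA, z, hzB, c, hcC, this⟩
    · -- g 2 ≠ 0: triple (a, b, z)
      have : LinearIndependent K ![a, b, z] :=
        aux_third hbzctriple (g := g) hg h2
      exact ⟨a, haA, b, hbB, z, hzC, this⟩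
  · -- g 1 ≠ 0: triple (a, b, c) using independence of ![b, c, z]
    have hbcz : LinearIndependent K ![b, c, z] := by
      have := li_perm hbzctriple (Equiv.swap 1 2)
      convert this using 1
      ext i; fin_cases i <;> simp [Equiv.swap_apply_of_ne_of_ne]
    have : LinearIndependent K ![a, b, c] :=
      aux_third hbcz (g := ![g 0, g 2, g 1]) (by simpa using by rw [← hg]; module) (by simpa using h1)
    exact ⟨a, haA, b, hbB, c, hcC, this⟩

lemma mem_sup_of_mem_span_pair {B C : Submodule K V} {b c x : V} (hb : b ∈ B) (hc : c ∈ C)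
    (hx : x ∈ span K {b, c}) : x ∈ B ⊔ C := by
  rw [Submodule.mem_span_pair] at hx
  obtain ⟨p, q, rfl⟩ := hx
  exact Submodule.add_mem _ (Submodule.mem_sup_left (Submodule.smul_mem _ _ hb))
    (Submodule.mem_sup_right (Submodule.smul_mem _ _ hc))

lemma aux_main [FiniteDimensional K V] (hV : finrank K V = 3)
    {A B C : Submodule K V} (hA : A ≠ ⊥) (hB : B ≠ ⊥) (hC : C ≠ ⊥)
    (H : ∀ a ∈ A, ∀ b ∈ B, ∀ c ∈ C, ¬ LinearIndependent K ![a, b, c]) :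
    (A ⊔ B ⊔ C ≠ ⊤) ∨ (A = B ∧ finrank K A = 1) ∨ (A = C ∧ finrank K A = 1) ∨
      (B = C ∧ finrank K B = 1) := by
  by_cases hBCpair : ∃ b ∈ B, ∃ c ∈ C, LinearIndependent K ![b, c]
  swap
  · push_neg at hBCpair
    exact Or.inr (Or.inr (Or.inr (aux_pair hB hC hBCpair)))
  by_cases hACpair : ∃ a ∈ A, ∃ c ∈ C, LinearIndependent K ![a, c]
  swap
  · push_neg at hACpair
    exact Or.inr (Or.inr (Or.inl (aux_pair hA hC hACpair)))
  by_cases hABpair : ∃ a ∈ A, ∃ b ∈ B, LinearIndependent K ![a, b]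
  swap
  · push_neg at hABpair
    exact Or.inr (Or.inl (aux_pair hA hB hABpair))
  obtain ⟨b0, hb0, c0, hc0, hbc0⟩ := hBCpair
  obtain ⟨a0, ha0, c1, hc1, hac1⟩ := hACpair
  obtain ⟨a1, ha1, b1, hb1, hab1⟩ := hABpair
  -- each submodule is contained in the join of the other two
  have hAle : A ≤ B ⊔ C := by
    intro a ha
    by_contra hmem
    have hnot : a ∉ span K {b0, c0} := fun h => hmem (mem_sup_of_mem_span_pair hb0 hc0 h)
    exact H a ha b0 hb0 c0 hc0 (li_triple hbc0 hnot)
  have hBle : B ≤ A ⊔ C := by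
    intro b hb
    by_contra hmem
    have hnot : b ∉ span K {a0, c1} := fun h => hmem (mem_sup_of_mem_span_pair ha0 hc1 h)
    exact H a0 ha0 b hb c1 hc1 (li_swap01 (li_triple hac1 hnot))
  have hCle : C ≤ A ⊔ B := by
    intro c hc
    by_contra hmem
    have hnot : c ∉ span K {a1, b1} := fun h => hmem (mem_sup_of_mem_span_pair ha1 hb1 h)
    exact H a1 ha1 b1 hb1 c hc (li_cycle (li_triple hab1 hnot))
  by_cases htop : A ⊔ B ⊔ C = ⊤
  swap
  · exact Or.inl htop
  exfalso
  -- pairwise joins are ⊤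
  have hBC : B ⊔ C = ⊤ := by
    rw [← top_le_iff, ← htop]
    exact sup_le (sup_le hAle le_sup_left) le_sup_right
  have hAC : A ⊔ C = ⊤ := by
    rw [← top_le_iff, ← htop]
    exact sup_le (sup_le le_sup_left hBle) le_sup_right
  have hAB : A ⊔ B = ⊤ := by
    rw [← top_le_iff, ← htop]
    exact sup_le (sup_le le_sup_left le_sup_right) hCle
  -- if some submodule is ⊤, directly find an independent triple
  have hfrA : finrank K A ≤ 3 := hV ▸ Submodule.finrank_le A
  have hfrB : finrank K B ≤ 3 := hV ▸ Submodule.finrank_le B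
  have hfrC : finrank K C ≤ 3 := hV ▸ Submodule.finrank_le C
  -- helper to pick an element of ⊤ outside a span of an independent pair
  have pick : ∀ x y : V, LinearIndependent K ![x, y] → ∃ w : V, w ∉ span K {x, y} := by
    intro x y hxy
    by_contra hc
    push_neg at hc
    have : (⊤ : Submodule K V) ≤ span K {x, y} := fun w _ => hc w
    have h2 : finrank K (span K {x, y} : Submodule K V) = 2 := finrank_span_pair hxy
    rw [top_le_iff] at this
    rw [this, finrank_top, hV] at h2
    omega
  rcases eq_or_ne (finrank K A) 3 with h3 | h3
  · have hAtop : A = ⊤ := Submodule.eq_top_of_finrank_eq (by rw [h3, hV])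
    obtain ⟨a, hnot⟩ := pick b0 c0 hbc0
    exact H a (hAtop ▸ Submodule.mem_top) b0 hb0 c0 hc0 (li_triple hbc0 hnot)
  rcases eq_or_ne (finrank K B) 3 with h3b | h3b
  · have hBtop : B = ⊤ := Submodule.eq_top_of_finrank_eq (by rw [h3b, hV])
    obtain ⟨b, hnot⟩ := pick a0 c1 hac1
    exact H a0 ha0 b (hBtop ▸ Submodule.mem_top) c1 hc1 (li_swap01 (li_triple hac1 hnot))
  rcases eq_or_ne (finrank K C) 3 with h3c | h3c
  · have hCtop : C = ⊤ := Submodule.eq_top_of_finrank_eq (by rw [h3c, hV])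
    obtain ⟨c, hnot⟩ := pick a1 b1 hab1
    exact H a1 ha1 b1 hb1 c (hCtop ▸ Submodule.mem_top) (li_cycle (li_triple hab1 hnot))
  -- now all ranks ≤ 2 and pairwise sums ≥ 3
  have hsumBC : 3 ≤ finrank K B + finrank K C := by
    have := Submodule.finrank_sup_add_finrank_inf_eq B C
    rw [hBC, finrank_top, hV] at this
    omega
  have hsumAC : 3 ≤ finrank K A + finrank K C := by
    have := Submodule.finrank_sup_add_finrank_inf_eq A C
    rw [hAC, finrank_top, hV] at this
    omega
  have hsumAB : 3 ≤ finrank K A + finrank K B := by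
    have := Submodule.finrank_sup_add_finrank_inf_eq A B
    rw [hAB, finrank_top, hV] at this
    omega
  have hcases : (finrank K B = 2 ∧ finrank K C = 2) ∨ (finrank K A = 2 ∧ finrank K C = 2) ∨
      (finrank K A = 2 ∧ finrank K B = 2) := by omega
  rcases hcases with ⟨h1, h2⟩ | ⟨h1, h2⟩ | ⟨h1, h2⟩
  · obtain ⟨a, ha, b, hb, c, hc, hli⟩ := aux_two_planes hV hA h1 h2 hBC
    exact H a ha b hb c hc hli
  · obtain ⟨b, hb, a, ha, c, hc, hli⟩ := aux_two_planes hV hB h1 h2 hAC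
    exact H a ha b hb c hc (li_swap01 hli)
  · obtain ⟨c, hc, a, ha, b, hb, hli⟩ := aux_two_planes hV hC h1 h2 hAB
    exact H a ha b hb c hc (li_cycle hli)

lemma finrank_sup_mkQ [FiniteDimensional K V] (p x : Submodule K V) :
    finrank K (p ⊔ x : Submodule K V) = finrank K (Submodule.map p.mkQ x) + finrank K p := by
  have h1 := LinearMap.finrank_range_add_finrank_ker (p.mkQ ∘ₗ (p ⊔ x).subtype)
  have hrange : LinearMap.range (p.mkQ ∘ₗ (p ⊔ x).subtype) = Submodule.map p.mkQ x := by
    rw [LinearMap.range_comp, Submodule.range_subtype, Submodule.map_sup,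
      Submodule.mkQ_map_self, bot_sup_eq]
  have hker : LinearMap.ker (p.mkQ ∘ₗ (p ⊔ x).subtype) = Submodule.comap (p ⊔ x).subtype p := by
    rw [LinearMap.ker_comp, Submodule.ker_mkQ]
  rw [hrange, hker] at h1
  rw [← h1, LinearEquiv.finrank_eq (Submodule.comapSubtypeEquivOfLe (le_sup_left : p ≤ p ⊔ x))]

lemma map_mkQ_ne_bot [FiniteDimensional K V] {p x : Submodule K V}
    (h2p : finrank K p = 2) (h2x : finrank K x = 2) (hne : x ≠ p) :
    Submodule.map p.mkQ x ≠ ⊥ := by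
  intro hbot
  apply hne
  have hle : x ≤ p := by
    intro v hv
    have : p.mkQ v ∈ Submodule.map p.mkQ x := Submodule.mem_map_of_mem hv
    rw [hbot] at this
    simpa [Submodule.Quotient.mk_eq_zero] using this
  exact eq_of_le_of_finrank_le hle (by omega)

/-- Two distinct 2-dimensional subspaces span at least dimension 3. -/
lemma sup_lines [FiniteDimensional K V] {a b : Submodule K V}
    (h2a : finrank K a = 2) (h2b : finrank K b = 2) (hne : a ≠ b) :
    3 ≤ finrank K (a ⊔ b : Submodule K V) := by
  have hsum := Submodule.finrank_sup_add_finrank_inf_eq a b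
  have hinfle : finrank K (a ⊓ b : Submodule K V) ≤ 2 :=
    h2a ▸ Submodule.finrank_mono inf_le_left
  rcases eq_or_ne (finrank K (a ⊓ b : Submodule K V)) 2 with h2 | h2
  · exfalso
    apply hne
    have ha : a ⊓ b = a := eq_of_le_of_finrank_le inf_le_left (by omega)
    have hb : a ⊓ b = b := eq_of_le_of_finrank_le inf_le_right (by omega)
    rw [← ha, hb]
  · omega

/-- Extension of a subspace to one of prescribed dimension. -/
lemma exists_superspace [FiniteDimensional K V] (n : ℕ) :
    ∀ W : Submodule K V, finrank K W + n ≤ finrank K V →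
      ∃ H, W ≤ H ∧ finrank K H = finrank K W + n := by
  induction n with
  | zero => exact fun W _ => ⟨W, le_rfl, rfl⟩
  | succ n ih =>
    intro W hW
    have hlt : finrank K W < finrank K V := by omega
    obtain ⟨m, hm⟩ := Submodule.exists_of_finrank_lt W hlt
    have hmW : m ∉ W := by simpa using hm 1 one_ne_zero
    have hmne : m ≠ 0 := fun h => hmW (h ▸ zero_mem W)
    have hinf : W ⊓ (K ∙ m) = ⊥ := by
      rw [eq_bot_iff]
      intro v hv
      obtain ⟨hv1, hv2⟩ := Submodule.mem_inf.mp hv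
      rw [Submodule.mem_span_singleton] at hv2
      obtain ⟨r, rfl⟩ := hv2
      rcases eq_or_ne r 0 with rfl | hr
      · simp
      · exact absurd hv1 (hm r hr)
    have hrank : finrank K (W ⊔ (K ∙ m) : Submodule K V) = finrank K W + 1 := by
      have := Submodule.finrank_sup_add_finrank_inf_eq W (K ∙ m)
      rw [hinf, finrank_bot, finrank_span_singleton hmne] at this
      omega
    obtain ⟨H, hle, hH⟩ := ih (W ⊔ (K ∙ m)) (by omega)
    exact ⟨H, le_trans le_sup_left hle, by omega⟩

/-- The key step: if every 3-plane meeting the lines `a, b, c` also meets `p`, and the four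
lines span, then two of `a, b, c` span the same 3-dimensional space together with `p`. -/
lemma key_step [FiniteDimensional K V] (hfive : finrank K V = 5)
    {p a b c : Submodule K V}
    (h2p : finrank K p = 2) (h2a : finrank K a = 2) (h2b : finrank K b = 2)
    (h2c : finrank K c = 2) (hap : a ≠ p) (hbp : b ≠ p) (hcp : c ≠ p)
    (htop : p ⊔ a ⊔ b ⊔ c = ⊤)
    (hspecial : ∀ Λ : Submodule K V, finrank K Λ = 3 →
      Λ ⊓ a ≠ ⊥ → Λ ⊓ b ≠ ⊥ → Λ ⊓ c ≠ ⊥ → Λ ⊓ p ≠ ⊥) :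
    (p ⊔ a = p ⊔ b ∧ finrank K (p ⊔ a : Submodule K V) = 3) ∨
    (p ⊔ a = p ⊔ c ∧ finrank K (p ⊔ a : Submodule K V) = 3) ∨
    (p ⊔ b = p ⊔ c ∧ finrank K (p ⊔ b : Submodule K V) = 3) := by
  have hQ3 : finrank K (V ⧸ p) = 3 := by
    have := Submodule.finrank_quotient_add_finrank p
    rw [hfive, h2p] at this
    omega
  set A := Submodule.map p.mkQ a with hAdef
  set B := Submodule.map p.mkQ b with hBdef
  set C := Submodule.map p.mkQ c with hCdef
  have hA : A ≠ ⊥ := map_mkQ_ne_bot h2p h2a hap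
  have hB : B ≠ ⊥ := map_mkQ_ne_bot h2p h2b hbp
  have hC : C ≠ ⊥ := map_mkQ_ne_bot h2p h2c hcp
  have H : ∀ x ∈ A, ∀ y ∈ B, ∀ z ∈ C, ¬ LinearIndependent K ![x, y, z] := by
    rintro x hx y hy z hz hli
    obtain ⟨va, hva, hvax⟩ := hx
    obtain ⟨vb, hvb, hvby⟩ := hy
    obtain ⟨vc, hvc, hvcz⟩ := hz
    have hcomp : p.mkQ ∘ ![va, vb, vc] = ![x, y, z] := by
      ext i
      fin_cases i <;> simp [hvax, hvby, hvcz]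
    have hliv : LinearIndependent K ![va, vb, vc] := by
      apply LinearIndependent.of_comp p.mkQ
      rw [hcomp]
      exact hli
    set Λ := span K (Set.range ![va, vb, vc]) with hΛdef
    have hΛ3 : finrank K Λ = 3 := by
      rw [hΛdef, finrank_span_eq_card hliv]
      simp
    have hmem : ∀ i : Fin 3, ![va, vb, vc] i ∈ Λ := fun i =>
      Submodule.subset_span (Set.mem_range_self i)
    have hne : ∀ i : Fin 3, ![va, vb, vc] i ≠ 0 := fun i => hliv.ne_zero i
    have hΛa : Λ ⊓ a ≠ ⊥ := by
      rw [Submodule.ne_bot_iff]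
      exact ⟨va, ⟨hmem 0, hva⟩, hne 0⟩
    have hΛb : Λ ⊓ b ≠ ⊥ := by
      rw [Submodule.ne_bot_iff]
      exact ⟨vb, ⟨hmem 1, hvb⟩, hne 1⟩
    have hΛc : Λ ⊓ c ≠ ⊥ := by
      rw [Submodule.ne_bot_iff]
      exact ⟨vc, ⟨hmem 2, hvc⟩, hne 2⟩
    have hΛp : Λ ⊓ p = ⊥ := by
      rw [eq_bot_iff]
      intro v hv
      obtain ⟨hv1, hv2⟩ := Submodule.mem_inf.mp hv
      rw [hΛdef, mem_span_range_iff_exists_fun] at hv1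
      obtain ⟨g, hg⟩ := hv1
      have himg : g 0 • x + g 1 • y + g 2 • z = 0 := by
        have := congrArg p.mkQ hg
        simp only [map_add, map_smul, Fin.sum_univ_three] at this
        rw [show p.mkQ v = 0 from (Submodule.Quotient.mk_eq_zero p).mpr hv2] at this
        simpa [hvax, hvby, hvcz] using this
      have hg0 := Fintype.linearIndependent_iff.mp hli g
        (by simpa [Fin.sum_univ_three] using himg)
      have : v = 0 := by
        rw [← hg, Fin.sum_univ_three, hg0 0, hg0 1, hg0 2]
        simp
      simp [this]
    exact hspecial Λ hΛ3 hΛa hΛb hΛc hΛp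
  have hdisj := aux_main hQ3 hA hB hC H
  rcases hdisj with h1 | ⟨hAB, hr⟩ | ⟨hAC, hr⟩ | ⟨hBC, hr⟩
  · exfalso
    apply h1
    rw [hAdef, hBdef, hCdef, ← Submodule.map_sup, ← Submodule.map_sup,
      Submodule.map_mkQ_eq_top]
    rw [← sup_assoc, ← sup_assoc]
    exact htop
  · left
    constructor
    · have := congrArg (Submodule.comap p.mkQ) hAB
      rwa [hAdef, hBdef, Submodule.comap_map_mkQ, Submodule.comap_map_mkQ] at this
    · rw [finrank_sup_mkQ, ← hAdef, hr, h2p]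
  · right; left
    constructor
    · have := congrArg (Submodule.comap p.mkQ) hAC
      rwa [hAdef, hCdef, Submodule.comap_map_mkQ, Submodule.comap_map_mkQ] at this
    · rw [finrank_sup_mkQ, ← hAdef, hr, h2p]
  · right; right
    constructor
    · have := congrArg (Submodule.comap p.mkQ) hBC
      rwa [hBdef, hCdef, Submodule.comap_map_mkQ, Submodule.comap_map_mkQ] at this
    · rw [finrank_sup_mkQ, ← hBdef, hr, h2p]

end AuxiliaryLemmas

section MainTheorem

open Submodule

/-- Four distinct lines in `ℙ⁴` in special position with respect to 2-planes are contained
in a common 3-plane (hyperplane). -/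
theorem four_lines_special_position_in_hyperplane
    (l : Fin 4 → Submodule ℂ (Fin 5 → ℂ))
    (hl : ∀ i, finrank ℂ (l i) = 2)
    (hd : Function.Injective l)
    (hsp : SpecialPosition l) :
    ∃ H : Submodule ℂ (Fin 5 → ℂ), finrank ℂ H = 4 ∧ ∀ i, l i ≤ H := by
  classical
  have hfive : finrank ℂ (Fin 5 → ℂ) = 5 := by simp
  set W : Submodule ℂ (Fin 5 → ℂ) := ⨆ i, l i with hWdef
  by_cases hW4 : finrank ℂ W ≤ 4
  · obtain ⟨H, hle, hH⟩ := exists_superspace (4 - finrank ℂ W) W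
      (by rw [hfive]; omega)
    exact ⟨H, by omega, fun i => le_trans (le_iSup l i) hle⟩
  · push_neg at hW4
    have hWle : finrank ℂ W ≤ 5 := le_trans (Submodule.finrank_le W) (le_of_eq hfive)
    have hWtop : W = ⊤ := Submodule.eq_top_of_finrank_eq (by omega)
    exfalso
    have key4 : ∀ i j1 j2 j3 : Fin 4, j1 ≠ i → j2 ≠ i → j3 ≠ i →
        j1 ≠ j2 → j1 ≠ j3 → j2 ≠ j3 →
        (∀ t : Fin 4, t ≠ i → t = j1 ∨ t = j2 ∨ t = j3) →
        ∃ u v : Fin 4, u ≠ i ∧ v ≠ i ∧ u ≠ v ∧ l i ⊔ l u = l i ⊔ l v ∧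
          finrank ℂ (l i ⊔ l u : Submodule ℂ (Fin 5 → ℂ)) = 3 := by
      intro i j1 j2 j3 h1 h2 h3 h12 h13 h23 hcov
      have htop' : l i ⊔ l j1 ⊔ l j2 ⊔ l j3 = ⊤ := by
        rw [← top_le_iff, ← hWtop, hWdef]
        apply iSup_le
        intro t
        rcases eq_or_ne t i with rfl | hti
        · exact le_sup_left.trans (le_sup_left.trans le_sup_left)
        · rcases hcov t hti with rfl | rfl | rfl
          · exact le_sup_right.trans (le_sup_left.trans le_sup_left)
          · exact le_sup_right.trans le_sup_left
          · exact le_sup_right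
      have hspec : ∀ Λ : Submodule ℂ (Fin 5 → ℂ), finrank ℂ Λ = 3 →
          Λ ⊓ l j1 ≠ ⊥ → Λ ⊓ l j2 ≠ ⊥ → Λ ⊓ l j3 ≠ ⊥ → Λ ⊓ l i ≠ ⊥ := by
        intro Λ h3d ha hb hc
        apply hsp i Λ h3d
        intro j hj
        rcases hcov j hj with rfl | rfl | rfl <;> assumption
      have hne : ∀ u : Fin 4, u ≠ i → l u ≠ l i := fun u hu h => hu (hd h)
      rcases key_step hfive (hl i) (hl j1) (hl j2) (hl j3)
          (hne j1 h1) (hne j2 h2) (hne j3 h3) htop' hspec with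
        ⟨he, hr⟩ | ⟨he, hr⟩ | ⟨he, hr⟩
      · exact ⟨j1, j2, h1, h2, h12, he, hr⟩
      · exact ⟨j1, j3, h1, h3, h13, he, hr⟩
      · exact ⟨j2, j3, h2, h3, h23, he, hr⟩
    obtain ⟨u, v, hu0, hv0, huv, heq1, hr1⟩ :=
      key4 0 1 2 3 (by decide) (by decide) (by decide) (by decide) (by decide)
        (by decide) (by decide)
    have hmex : ∀ u v : Fin 4, u ≠ 0 → v ≠ 0 → u ≠ v →
        ∃ m : Fin 4, m ≠ 0 ∧ m ≠ u ∧ m ≠ v ∧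
          ∀ t : Fin 4, t ≠ m → (t = 0 ∨ t = u ∨ t = v) := by decide
    obtain ⟨m, hm0, hmu, hmv, hmcov⟩ := hmex u v hu0 hv0 huv
    obtain ⟨u', v', hu'm, hv'm, hu'v', heq2, hr2⟩ :=
      key4 m 0 u v (Ne.symm hm0) (Ne.symm hmu) (Ne.symm hmv)
        (Ne.symm hu0) (Ne.symm hv0) huv hmcov
    set W1 : Submodule ℂ (Fin 5 → ℂ) := l 0 ⊔ l u with hW1def
    have hleW1 : ∀ t : Fin 4, (t = 0 ∨ t = u ∨ t = v) → l t ≤ W1 := by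
      rintro t (rfl | rfl | rfl)
      · exact le_sup_left
      · exact le_sup_right
      · exact le_sup_right.trans heq1.ge
    have hu'le : l u' ≤ W1 := hleW1 u' (hmcov u' hu'm)
    have hv'le : l v' ≤ W1 := hleW1 v' (hmcov v' hv'm)
    have h3sup : 3 ≤ finrank ℂ (l u' ⊔ l v' : Submodule ℂ (Fin 5 → ℂ)) :=
      sup_lines (hl u') (hl v') (fun h => hu'v' (hd h))
    have he1 : l u' ⊔ l v' = W1 :=
      eq_of_le_of_finrank_le (sup_le hu'le hv'le) (by rw [hr1]; omega)
    have he2 : l u' ⊔ l v' = l m ⊔ l u' :=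
      eq_of_le_of_finrank_le
        (sup_le le_sup_right (heq2 ▸ le_sup_right)) (by rw [hr2]; omega)
    have hW12 : W1 = l m ⊔ l u' := he1 ▸ he2
    have hallle : ∀ t : Fin 4, l t ≤ W1 := by
      intro t
      rcases eq_or_ne t m with rfl | htm
      · rw [hW12]; exact le_sup_left
      · exact hleW1 t (hmcov t htm)
    have htople : (⊤ : Submodule ℂ (Fin 5 → ℂ)) ≤ W1 := hWtop ▸ iSup_le hallle
    have hfin := Submodule.finrank_mono htople
    rw [finrank_top, hfive, hr1] at hfin
    omega

end MainTheorem
end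

section
/- Let l_1, l_2, l_3, l_4 be four distinct pairwise skew lines spanning a 3-plane H in P^4 which are in special position with respect to 2-planes. Then the four lines lie in the same ruling of a smooth quadric surface Q contained in H. -/
open Module

private lemma exists_pair (W : Submodule ℂ (Fin 5 → ℂ)) (hW : finrank ℂ W = 2) :
    ∃ u v : Fin 5 → ℂ, u ∈ W ∧ v ∈ W ∧ ∀ c1 c2 : ℂ, c1 • u + c2 • v = 0 → c1 = 0 ∧ c2 = 0 := by
  let E := finBasisOfFinrankEq ℂ W hW
  refine ⟨E 0, E 1, (E 0).2, (E 1).2, fun c1 c2 h => ?_⟩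
  have h2 : c1 • E 0 + c2 • E 1 = (0 : W) := by
    apply Subtype.ext
    simpa only [Submodule.coe_add, SetLike.val_smul, ZeroMemClass.coe_zero] using h
  have h3 := Fintype.linearIndependent_iff.mp E.linearIndependent ![c1, c2]
    (by simpa only [Fin.sum_univ_two, Matrix.cons_val_zero, Matrix.cons_val_one, Matrix.head_cons] using h2)
  exact ⟨h3 0, h3 1⟩

private lemma span_pair (W : Submodule ℂ (Fin 5 → ℂ)) (hW : finrank ℂ W = 2)
    (u v : Fin 5 → ℂ) (hu : u ∈ W) (hv : v ∈ W)
    (hind : ∀ c1 c2 : ℂ, c1 • u + c2 • v = 0 → c1 = 0 ∧ c2 = 0) :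
    W = Submodule.span ℂ (Set.range ![u, v]) := by
  have hli : LinearIndependent ℂ ![u, v] := by
    rw [Fintype.linearIndependent_iff]
    intro g hg
    have h := hind (g 0) (g 1) (by simpa [Fin.sum_univ_two] using hg)
    intro i; fin_cases i
    · exact h.1
    · exact h.2
  have hle : Submodule.span ℂ (Set.range ![u,v]) ≤ W := by
    rw [Submodule.span_le]; rintro x ⟨i, rfl⟩; fin_cases i <;> assumption
  exact (Submodule.eq_of_le_of_finrank_le hle
    (by rw [hW, finrank_span_eq_card hli]; simp)).symm

/-- Four distinct pairwise skew lines spanning a 3-plane `H` of `ℙ⁴` which are in special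
position lie on one ruling of a smooth quadric surface `Q ⊆ H`: there is a symmetric
bilinear form, nondegenerate on `H`, for which each of the four (pairwise disjoint) lines
is totally isotropic, i.e. lies on the smooth quadric `Q ⊆ H` cut out by the form.
(Pairwise skew lines on a smooth quadric surface automatically belong to the same ruling.) -/
theorem four_skew_lines_lie_on_quadric_ruling
    (l : Fin 4 → Submodule ℂ (Fin 5 → ℂ))
    (H : Submodule ℂ (Fin 5 → ℂ))
    (hl : ∀ i, finrank ℂ (l i) = 2)
    (hskew : ∀ i j, i ≠ j → l i ⊓ l j = ⊥)
    (hH : finrank ℂ H = 4)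
    (hspan : (⨆ i, l i) = H)
    (hsp : SpecialPosition l) :
    ∃ B : (Fin 5 → ℂ) →ₗ[ℂ] (Fin 5 → ℂ) →ₗ[ℂ] ℂ,
      (∀ x y, B x y = B y x) ∧
      (∀ x ∈ H, (∀ y ∈ H, B x y = 0) → x = 0) ∧
      (∀ i, ∀ x ∈ l i, ∀ y ∈ l i, B x y = 0) := by
  classical
  have hle : ∀ i, l i ≤ H := fun i => hspan ▸ le_iSup l i
  obtain ⟨e1, e2, he1, he2, heind⟩ := exists_pair (l 0) (hl 0)
  -- every line skew to `l 1` spans `H` together with it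
  have hsup : ∀ j : Fin 4, j ≠ 1 → l j ⊔ l 1 = H := by
    intro j hj
    have h2 := Submodule.finrank_sup_add_finrank_inf_eq (l j) (l 1)
    rw [hskew j 1 hj, finrank_bot, hl, hl] at h2
    exact Submodule.eq_of_le_of_finrank_le (sup_le (hle j) (hle 1)) (by omega)
  have decomp : ∀ (k : Fin 4), k ≠ 1 → ∀ x, x ∈ H → ∃ z ∈ l 1, x + z ∈ l k := by
    intro k hk x hx
    rw [← hsup k hk] at hx
    obtain ⟨y, hy, z, hz, hyz⟩ := Submodule.mem_sup.mp hx
    refine ⟨-z, neg_mem hz, ?_⟩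
    have : x + -z = y := by rw [← hyz]; abel
    rwa [this]
  obtain ⟨f1, hf1, hw1⟩ := decomp 2 (by decide) e1 (hle 0 he1)
  obtain ⟨f2, hf2, hw2⟩ := decomp 2 (by decide) e2 (hle 0 he2)
  obtain ⟨g1, hg1, hu1⟩ := decomp 3 (by decide) e1 (hle 0 he1)
  obtain ⟨g2, hg2, hu2⟩ := decomp 3 (by decide) e2 (hle 0 he2)
  -- independence of f1, f2
  have hfind : ∀ c1 c2 : ℂ, c1 • f1 + c2 • f2 = 0 → c1 = 0 ∧ c2 = 0 := by
    intro c1 c2 h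
    have hmem : c1 • e1 + c2 • e2 ∈ l 2 ⊓ l 0 := by
      constructor
      · have hm : c1 • (e1 + f1) + c2 • (e2 + f2) ∈ l 2 :=
          add_mem (Submodule.smul_mem _ _ hw1) (Submodule.smul_mem _ _ hw2)
        have he : c1 • (e1 + f1) + c2 • (e2 + f2) = c1 • e1 + c2 • e2 := by
          linear_combination (norm := module) h
        rwa [he] at hm
      · exact add_mem (Submodule.smul_mem _ _ he1) (Submodule.smul_mem _ _ he2)
    rw [hskew 2 0 (by decide)] at hmem
    exact heind _ _ (by simpa using hmem)
  -- a vector outside H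
  obtain ⟨e0, he0⟩ : ∃ e0, e0 ∉ H := by
    by_contra h
    push_neg at h
    have : H = ⊤ := Submodule.eq_top_iff'.mpr h
    rw [this, finrank_top] at hH
    simp at hH
  -- independence of the five vectors
  have hbig : ∀ c : Fin 5 → ℂ,
      c 0 • e1 + c 1 • e2 + c 2 • f1 + c 3 • f2 + c 4 • e0 = 0 → ∀ i, c i = 0 := by
    intro c hc
    have hc4 : c 4 = 0 := by
      by_contra h4
      apply he0
      have heq : c 4 • e0 = -(c 0 • e1 + c 1 • e2 + c 2 • f1 + c 3 • f2) := by
        linear_combination (norm := module) hc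
      have hmem : c 4 • e0 ∈ H := by
        rw [heq]
        exact neg_mem (add_mem (add_mem (add_mem
          (Submodule.smul_mem _ _ (hle 0 he1)) (Submodule.smul_mem _ _ (hle 0 he2)))
          (Submodule.smul_mem _ _ (hle 1 hf1))) (Submodule.smul_mem _ _ (hle 1 hf2)))
      have h5 := H.smul_mem (c 4)⁻¹ hmem
      rwa [smul_smul, inv_mul_cancel₀ h4, one_smul] at h5
    rw [hc4, zero_smul, add_zero] at hc
    have hmem : c 0 • e1 + c 1 • e2 ∈ l 0 ⊓ l 1 := by
      constructor
      · exact add_mem (Submodule.smul_mem _ _ he1) (Submodule.smul_mem _ _ he2)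
      · have heq : c 0 • e1 + c 1 • e2 = -(c 2 • f1 + c 3 • f2) := by
          linear_combination (norm := module) hc
        rw [heq]
        exact neg_mem (add_mem (Submodule.smul_mem _ _ hf1) (Submodule.smul_mem _ _ hf2))
    rw [hskew 0 1 (by decide)] at hmem
    obtain ⟨h0, h1⟩ := heind _ _ (by simpa using hmem)
    rw [h0, h1, zero_smul, zero_smul, zero_add, zero_add] at hc
    obtain ⟨h2, h3⟩ := hfind _ _ hc
    intro i
    fin_cases i
    · exact h0
    · exact h1
    · exact h2
    · exact h3
    · exact hc4
  -- span descriptions of the lines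
  have hspan0 : l 0 = Submodule.span ℂ (Set.range ![e1, e2]) :=
    span_pair (l 0) (hl 0) e1 e2 he1 he2 heind
  have hspan1 : l 1 = Submodule.span ℂ (Set.range ![f1, f2]) :=
    span_pair (l 1) (hl 1) f1 f2 hf1 hf2 hfind
  have hmix : ∀ a1 a2 : Fin 5 → ℂ, a1 ∈ l 1 → a2 ∈ l 1 →
      ∀ c1 c2 : ℂ, c1 • (e1 + a1) + c2 • (e2 + a2) = 0 → c1 = 0 ∧ c2 = 0 := by
    intro a1 a2 ha1 ha2 c1 c2 h
    have hmem : c1 • e1 + c2 • e2 ∈ l 0 ⊓ l 1 := by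
      constructor
      · exact add_mem (Submodule.smul_mem _ _ he1) (Submodule.smul_mem _ _ he2)
      · have heq : c1 • e1 + c2 • e2 = -(c1 • a1 + c2 • a2) := by
          linear_combination (norm := module) h
        rw [heq]
        exact neg_mem (add_mem (Submodule.smul_mem _ _ ha1) (Submodule.smul_mem _ _ ha2))
    rw [hskew 0 1 (by decide)] at hmem
    exact heind _ _ (by simpa using hmem)
  have hspan2 : l 2 = Submodule.span ℂ (Set.range ![e1 + f1, e2 + f2]) :=
    span_pair (l 2) (hl 2) _ _ hw1 hw2 (hmix f1 f2 hf1 hf2)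
  have hspan3 : l 3 = Submodule.span ℂ (Set.range ![e1 + g1, e2 + g2]) :=
    span_pair (l 3) (hl 3) _ _ hu1 hu2 (hmix g1 g2 hg1 hg2)
  -- coordinates of g1, g2 in terms of f1, f2
  obtain ⟨t1, ht1⟩ := (Submodule.mem_span_range_iff_exists_fun ℂ).mp (hspan1 ▸ hg1)
  obtain ⟨t2, ht2⟩ := (Submodule.mem_span_range_iff_exists_fun ℂ).mp (hspan1 ▸ hg2)
  simp only [Fin.sum_univ_two, Matrix.cons_val_zero, Matrix.cons_val_one, Matrix.head_cons] at ht1 ht2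
  -- the key relation coming from special position
  have key : ∀ a b : ℂ, (a ≠ 0 ∨ b ≠ 0) →
      b * (a * t1 0 + b * t2 0) = a * (a * t1 1 + b * t2 1) := by
    intro a b hab
    have hpne : a • e1 + b • e2 ≠ 0 := by
      intro h
      obtain ⟨h1, h2⟩ := heind a b h
      rcases hab with h' | h' <;> [exact h' h1; exact h' h2]
    have hqne : a • f1 + b • f2 ≠ 0 := by
      intro h
      obtain ⟨h1, h2⟩ := hfind a b h
      rcases hab with h' | h' <;> [exact h' h1; exact h' h2]
    have hpmem : a • e1 + b • e2 ∈ l 0 :=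
      add_mem (Submodule.smul_mem _ _ he1) (Submodule.smul_mem _ _ he2)
    have hqmem : a • f1 + b • f2 ∈ l 1 :=
      add_mem (Submodule.smul_mem _ _ hf1) (Submodule.smul_mem _ _ hf2)
    set Λ : Submodule ℂ (Fin 5 → ℂ) :=
      Submodule.span ℂ (Set.range ![e0, a • e1 + b • e2, a • f1 + b • f2]) with hΛ
    have hind3 : LinearIndependent ℂ ![e0, a • e1 + b • e2, a • f1 + b • f2] := by
      rw [Fintype.linearIndependent_iff]
      intro g hg
      simp only [Fin.sum_univ_three, Matrix.cons_val_zero, Matrix.cons_val_one,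
        Matrix.head_cons, Matrix.cons_val_two, Matrix.tail_cons] at hg
      have hX : (g 1 * a) • e1 + (g 1 * b) • e2 + (g 2 * a) • f1 + (g 2 * b) • f2
          + g 0 • e0 = 0 := by
        rw [← hg]; module
      have h5 := hbig ![g 1 * a, g 1 * b, g 2 * a, g 2 * b, g 0] (by simpa using hX)
      have hg0 : g 0 = 0 := by simpa using h5 4
      have hg1' : g 1 = 0 := by
        rcases hab with h' | h'
        · exact (mul_eq_zero.mp (by simpa using h5 0)).resolve_right h'
        · exact (mul_eq_zero.mp (by simpa using h5 1)).resolve_right h'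
      have hg2' : g 2 = 0 := by
        rcases hab with h' | h'
        · exact (mul_eq_zero.mp (by simpa using h5 2)).resolve_right h'
        · exact (mul_eq_zero.mp (by simpa using h5 3)).resolve_right h'
      intro i
      fin_cases i
      · exact hg0
      · exact hg1'
      · exact hg2'
    have hΛrank : finrank ℂ Λ = 3 := by
      rw [hΛ, finrank_span_eq_card hind3]
      simp
    have hmeet : ∀ j : Fin 4, j ≠ 3 → Λ ⊓ l j ≠ ⊥ := by
      intro j hj
      rw [Submodule.ne_bot_iff]
      have hpΛ : a • e1 + b • e2 ∈ Λ := Submodule.subset_span ⟨1, rfl⟩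
      have hqΛ : a • f1 + b • f2 ∈ Λ := Submodule.subset_span ⟨2, rfl⟩
      fin_cases j
      · exact ⟨a • e1 + b • e2, ⟨hpΛ, hpmem⟩, hpne⟩
      · exact ⟨a • f1 + b • f2, ⟨hqΛ, hqmem⟩, hqne⟩
      · refine ⟨(a • e1 + b • e2) + (a • f1 + b • f2), ⟨add_mem hpΛ hqΛ, ?_⟩, ?_⟩
        · have hm : a • (e1 + f1) + b • (e2 + f2) ∈ l 2 :=
            add_mem (Submodule.smul_mem _ _ hw1) (Submodule.smul_mem _ _ hw2)
          have heq : a • (e1 + f1) + b • (e2 + f2)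
              = (a • e1 + b • e2) + (a • f1 + b • f2) := by module
          rwa [heq] at hm
        · intro h
          apply hpne
          have hmem : a • e1 + b • e2 ∈ l 0 ⊓ l 1 := by
            refine ⟨hpmem, ?_⟩
            have heq : a • e1 + b • e2 = -(a • f1 + b • f2) :=
              eq_neg_of_add_eq_zero_left h
            rw [heq]
            exact neg_mem hqmem
          rw [hskew 0 1 (by decide)] at hmem
          simpa using hmem
      · exact absurd rfl hj
    have hne := hsp 3 Λ hΛrank hmeet
    obtain ⟨v, ⟨hvΛ, hvl3⟩, hv0⟩ := (Submodule.ne_bot_iff _).mp hne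
    obtain ⟨c, hc⟩ := (Submodule.mem_span_range_iff_exists_fun ℂ).mp hvΛ
    rw [hspan3] at hvl3
    obtain ⟨d, hd⟩ := (Submodule.mem_span_range_iff_exists_fun ℂ).mp hvl3
    simp only [Fin.sum_univ_three, Fin.sum_univ_two, Matrix.cons_val_zero,
      Matrix.cons_val_one, Matrix.head_cons, Matrix.cons_val_two, Matrix.tail_cons] at hc hd
    have hcomb : (c 1 * a - d 0) • e1 + (c 1 * b - d 1) • e2
        + (c 2 * a - (d 0 * t1 0 + d 1 * t2 0)) • f1
        + (c 2 * b - (d 0 * t1 1 + d 1 * t2 1)) • f2 + c 0 • e0 = 0 := by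
      have hvv : (c 0 • e0 + c 1 • (a • e1 + b • e2) + c 2 • (a • f1 + b • f2))
          - (d 0 • (e1 + g1) + d 1 • (e2 + g2)) = 0 := by
        rw [hc, hd]; abel
      rw [← ht1, ← ht2] at hvv
      rw [← hvv]; module
    have h5 := hbig ![c 1 * a - d 0, c 1 * b - d 1, c 2 * a - (d 0 * t1 0 + d 1 * t2 0),
      c 2 * b - (d 0 * t1 1 + d 1 * t2 1), c 0] (by simpa using hcomb)
    have hA : c 1 * a - d 0 = 0 := by simpa using h5 0
    have hB : c 1 * b - d 1 = 0 := by simpa using h5 1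
    have hC : c 2 * a - (d 0 * t1 0 + d 1 * t2 0) = 0 := by simpa using h5 2
    have hD : c 2 * b - (d 0 * t1 1 + d 1 * t2 1) = 0 := by simpa using h5 3
    have hE : c 0 = 0 := by simpa using h5 4
    have hd0 : d 0 = c 1 * a := by linear_combination -hA
    have hd1 : d 1 = c 1 * b := by linear_combination -hB
    have hc1 : c 1 ≠ 0 := by
      intro h1
      apply hv0
      have hc2 : c 2 = 0 := by
        rcases hab with h' | h'
        · have : c 2 * a = 0 := by rw [hd0, hd1, h1] at hC; linear_combination hC
          exact (mul_eq_zero.mp this).resolve_right h'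
        · have : c 2 * b = 0 := by rw [hd0, hd1, h1] at hD; linear_combination hD
          exact (mul_eq_zero.mp this).resolve_right h'
      rw [← hc, hE, h1, hc2]
      simp
    rw [hd0, hd1] at hC hD
    exact mul_left_cancel₀ hc1 (by linear_combination a * hD - b * hC)
  have h10 := key 1 0 (Or.inl one_ne_zero)
  have h01 := key 0 1 (Or.inr one_ne_zero)
  have h11 := key 1 1 (Or.inl one_ne_zero)
  have ht11 : t1 1 = 0 := by linear_combination -h10
  have ht20 : t2 0 = 0 := by linear_combination h01
  have hmu : t2 1 = t1 0 := by linear_combination h10 + h01 - h11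
  set μ := t1 0 with hμdef
  have hg1' : g1 = μ • f1 := by rw [← ht1, ht11]; module
  have hg2' : g2 = μ • f2 := by rw [← ht2, ht20, hmu]; module
  -- the basis of ℂ⁵
  have hli5 : LinearIndependent ℂ ![e1, e2, f1, f2, e0] := by
    rw [Fintype.linearIndependent_iff]
    intro g hg
    exact hbig g (by simpa [Fin.sum_univ_five] using hg)
  let b : Basis (Fin 5) ℂ (Fin 5 → ℂ) :=
    basisOfLinearIndependentOfCardEqFinrank hli5 (by simp)
  have hb : ∀ j, b j = ![e1, e2, f1, f2, e0] j := fun j => by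
    rw [coe_basisOfLinearIndependentOfCardEqFinrank]
  have hb0 : b 0 = e1 := by simpa using hb 0
  have hb1 : b 1 = e2 := by simpa using hb 1
  have hb2 : b 2 = f1 := by simpa using hb 2
  have hb3 : b 3 = f2 := by simpa using hb 3
  have hcb : ∀ i j : Fin 5, b.coord i (b j) = if j = i then 1 else 0 := by
    intro i j
    rw [Basis.coord_apply, Basis.repr_self, Finsupp.single_apply]
  -- the bilinear form
  let B : (Fin 5 → ℂ) →ₗ[ℂ] (Fin 5 → ℂ) →ₗ[ℂ] ℂ :=
    LinearMap.mk₂ ℂ (fun x y => b.coord 0 x * b.coord 3 y + b.coord 3 x * b.coord 0 y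
      - b.coord 1 x * b.coord 2 y - b.coord 2 x * b.coord 1 y)
      (fun m1 m2 n => by simp only [map_add]; ring)
      (fun c m n => by simp only [map_smul, smul_eq_mul]; ring)
      (fun m n1 n2 => by simp only [map_add]; ring)
      (fun c m n => by simp only [map_smul, smul_eq_mul]; ring)
  have hB : ∀ x y, B x y = b.coord 0 x * b.coord 3 y + b.coord 3 x * b.coord 0 y
      - b.coord 1 x * b.coord 2 y - b.coord 2 x * b.coord 1 y := fun x y => rfl
  have iso_span : ∀ p q : Fin 5 → ℂ, B p p = 0 → B p q = 0 → B q p = 0 → B q q = 0 →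
      ∀ x ∈ Submodule.span ℂ (Set.range ![p, q]), ∀ y ∈ Submodule.span ℂ (Set.range ![p, q]),
      B x y = 0 := by
    intro p q h1 h2 h3 h4 x hx y hy
    obtain ⟨cx, hcx⟩ := (Submodule.mem_span_range_iff_exists_fun ℂ).mp hx
    obtain ⟨cy, hcy⟩ := (Submodule.mem_span_range_iff_exists_fun ℂ).mp hy
    rw [← hcx, ← hcy]
    simp only [Fin.sum_univ_two, Matrix.cons_val_zero, Matrix.cons_val_one, Matrix.head_cons,
      map_add, map_smul, LinearMap.add_apply, LinearMap.smul_apply, smul_eq_mul,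
      h1, h2, h3, h4]
    ring
  refine ⟨B, ?_, ?_, ?_⟩
  · intro x y
    rw [hB, hB]; ring
  · -- nondegeneracy on H
    intro x hx hxy
    have hspanH : H = Submodule.span ℂ (Set.range ![e1, e2, f1, f2]) := by
      have hli4 : LinearIndependent ℂ ![e1, e2, f1, f2] := by
        rw [Fintype.linearIndependent_iff]
        intro g hg
        have hX : g 0 • e1 + g 1 • e2 + g 2 • f1 + g 3 • f2 + (0 : ℂ) • e0 = 0 := by
          rw [zero_smul, add_zero, ← hg]
          simp [Fin.sum_univ_four]
        have h5 := hbig ![g 0, g 1, g 2, g 3, 0] (by simpa using hX)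
        intro i
        fin_cases i
        · exact h5 0
        · exact h5 1
        · exact h5 2
        · exact h5 3
      have hle4 : Submodule.span ℂ (Set.range ![e1, e2, f1, f2]) ≤ H := by
        rw [Submodule.span_le]
        rintro x ⟨i, rfl⟩
        fin_cases i
        · exact hle 0 he1
        · exact hle 0 he2
        · exact hle 1 hf1
        · exact hle 1 hf2
      exact (Submodule.eq_of_le_of_finrank_le hle4
        (by rw [hH, finrank_span_eq_card hli4]; simp)).symm
    rw [hspanH] at hx
    obtain ⟨c, hc⟩ := (Submodule.mem_span_range_iff_exists_fun ℂ).mp hx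
    simp only [Fin.sum_univ_four, Matrix.cons_val_zero, Matrix.cons_val_one, Matrix.head_cons,
      Matrix.cons_val_two, Matrix.tail_cons, Matrix.cons_val_three] at hc
    have h0 : B x f2 = 0 := hxy f2 (hle 1 hf2)
    have h1 : B x f1 = 0 := hxy f1 (hle 1 hf1)
    have h2 : B x e2 = 0 := hxy e2 (hle 0 he2)
    have h3 : B x e1 = 0 := hxy e1 (hle 0 he1)
    rw [← hc] at h0 h1 h2 h3 ⊢
    rw [hB] at h0 h1 h2 h3
    simp only [← hb0, ← hb1, ← hb2, ← hb3, map_add, map_smul, smul_eq_mul, hcb] at h0 h1 h2 h3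
    simp at h0 h1 h2 h3
    rw [h0, h1, h2, h3]
    simp
  · -- isotropy of the four lines
    have hv00 : B e1 e1 = 0 := by
      rw [hB]; simp only [← hb0, hcb]; simp
    have hv01 : B e1 e2 = 0 := by
      rw [hB]; simp only [← hb0, ← hb1, hcb]; simp
    have hv10 : B e2 e1 = 0 := by
      rw [hB]; simp only [← hb0, ← hb1, hcb]; simp
    have hv11 : B e2 e2 = 0 := by
      rw [hB]; simp only [← hb1, hcb]; simp
    have hw00 : B f1 f1 = 0 := by
      rw [hB]; simp only [← hb2, hcb]; simp
    have hw01 : B f1 f2 = 0 := by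
      rw [hB]; simp only [← hb2, ← hb3, hcb]; simp
    have hw10 : B f2 f1 = 0 := by
      rw [hB]; simp only [← hb2, ← hb3, hcb]; simp
    have hw11 : B f2 f2 = 0 := by
      rw [hB]; simp only [← hb3, hcb]; simp
    have hx00 : B (e1 + f1) (e1 + f1) = 0 := by
      rw [hB]; simp only [← hb0, ← hb1, ← hb2, ← hb3, map_add, hcb]; simp
    have hx01 : B (e1 + f1) (e2 + f2) = 0 := by
      rw [hB]; simp only [← hb0, ← hb1, ← hb2, ← hb3, map_add, hcb]; simp
    have hx10 : B (e2 + f2) (e1 + f1) = 0 := by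
      rw [hB]; simp only [← hb0, ← hb1, ← hb2, ← hb3, map_add, hcb]; simp
    have hx11 : B (e2 + f2) (e2 + f2) = 0 := by
      rw [hB]; simp only [← hb0, ← hb1, ← hb2, ← hb3, map_add, hcb]; simp
    have hy00 : B (e1 + g1) (e1 + g1) = 0 := by
      rw [hg1', hB]
      simp only [← hb0, ← hb1, ← hb2, ← hb3, map_add, map_smul, smul_eq_mul, hcb]
      simp
    have hy01 : B (e1 + g1) (e2 + g2) = 0 := by
      rw [hg1', hg2', hB]
      simp only [← hb0, ← hb1, ← hb2, ← hb3, map_add, map_smul, smul_eq_mul, hcb]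
      simp
    have hy10 : B (e2 + g2) (e1 + g1) = 0 := by
      rw [hg1', hg2', hB]
      simp only [← hb0, ← hb1, ← hb2, ← hb3, map_add, map_smul, smul_eq_mul, hcb]
      simp
    have hy11 : B (e2 + g2) (e2 + g2) = 0 := by
      rw [hg2', hB]
      simp only [← hb0, ← hb1, ← hb2, ← hb3, map_add, map_smul, smul_eq_mul, hcb]
      simp
    have case0 : ∀ x ∈ l 0, ∀ y ∈ l 0, B x y = 0 := by
      rw [hspan0]; exact iso_span e1 e2 hv00 hv01 hv10 hv11
    have case1 : ∀ x ∈ l 1, ∀ y ∈ l 1, B x y = 0 := by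
      rw [hspan1]; exact iso_span f1 f2 hw00 hw01 hw10 hw11
    have case2 : ∀ x ∈ l 2, ∀ y ∈ l 2, B x y = 0 := by
      rw [hspan2]; exact iso_span _ _ hx00 hx01 hx10 hx11
    have case3 : ∀ x ∈ l 3, ∀ y ∈ l 3, B x y = 0 := by
      rw [hspan3]; exact iso_span _ _ hy00 hy01 hy10 hy11
    intro i
    fin_cases i
    · exact case0
    · exact case1
    · exact case2
    · exact case3
end

section
/- Let l_1,...,l_4 be four distinct lines in P^4 spanning a 3-plane, such that l_1 and l_2 meet at a point P, l_3 does not pass through P, and the four lines are in special position with respect to 2-planes. Then l_3 and l_4 meet at a point P' ≠ P, and the 2-planes spanned by {l_1,l_2} and by {l_3,l_4} intersect exactly along the line PP'. -/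
open Module

private lemma span_pair_dim {u x : Fin 5 → ℂ} (hu : u ≠ 0) (hx : x ∉ Submodule.span ℂ {u}) :
    finrank ℂ (Submodule.span ℂ {u, x} : Submodule ℂ (Fin 5 → ℂ)) = 2 := by
  have hx0 : x ≠ 0 := fun h => hx (h ▸ Submodule.zero_mem _)
  have hsp : Submodule.span ℂ ({u, x} : Set (Fin 5 → ℂ)) =
      Submodule.span ℂ {u} ⊔ Submodule.span ℂ {x} := by
    rw [show ({u, x} : Set (Fin 5 → ℂ)) = insert u {x} from rfl, Submodule.span_insert]
  have hbot : Submodule.span ℂ {u} ⊓ Submodule.span ℂ {x} = ⊥ := by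
    rw [eq_bot_iff]
    rintro w ⟨hw1, hw2⟩
    obtain ⟨c, rfl⟩ := Submodule.mem_span_singleton.1 hw2
    rcases eq_or_ne c 0 with rfl | hc
    · simp
    · exact absurd (by
        have := Submodule.smul_mem _ c⁻¹ hw1
        rwa [smul_smul, inv_mul_cancel₀ hc, one_smul] at this) hx
  have h := Submodule.finrank_sup_add_finrank_inf_eq (Submodule.span ℂ {u})
    (Submodule.span ℂ {x})
  rw [hbot, finrank_bot, finrank_span_singleton hu, finrank_span_singleton hx0] at h
  rw [hsp]
  omega

/-- Special position also holds for 2-dimensional `M`: extend `M` to a 3-dimensional `Λ`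
with `Λ ⊓ l i = M ⊓ l i`. -/
private lemma sp2 (l : Fin 4 → Submodule ℂ (Fin 5 → ℂ)) (hl : ∀ i, finrank ℂ (l i) = 2)
    (hsp : SpecialPosition l) (i : Fin 4) (M : Submodule ℂ (Fin 5 → ℂ))
    (hM : finrank ℂ M = 2) (h : ∀ j, j ≠ i → M ⊓ l j ≠ ⊥) : M ⊓ l i ≠ ⊥ := by
  have hV : finrank ℂ (Fin 5 → ℂ) = 5 := by simp
  have hA := Submodule.finrank_sup_add_finrank_inf_eq M (l i)
  obtain ⟨z, hz⟩ : ∃ z, z ∉ M ⊔ l i := by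
    by_contra hc
    push_neg at hc
    have htop : M ⊔ l i = ⊤ := eq_top_iff.2 fun x _ => hc x
    rw [htop, finrank_top, hV, hM, hl i] at hA
    omega
  have hz0 : z ≠ 0 := fun h => hz (h ▸ Submodule.zero_mem _)
  have hzM : z ∉ M := fun h => hz (Submodule.mem_sup_left h)
  have hinf : M ⊓ Submodule.span ℂ {z} = ⊥ := by
    rw [eq_bot_iff]
    rintro w ⟨hw1, hw2⟩
    obtain ⟨c, rfl⟩ := Submodule.mem_span_singleton.1 hw2
    rcases eq_or_ne c 0 with rfl | hc
    · simp
    · exact absurd (by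
        have := Submodule.smul_mem _ c⁻¹ hw1
        rwa [smul_smul, inv_mul_cancel₀ hc, one_smul] at this) hzM
  have hΛ : finrank ℂ (M ⊔ Submodule.span ℂ {z} : Submodule ℂ (Fin 5 → ℂ)) = 3 := by
    have h2 := Submodule.finrank_sup_add_finrank_inf_eq M (Submodule.span ℂ {z})
    rw [hinf, finrank_bot, finrank_span_singleton hz0, hM] at h2
    omega
  have hkey : (M ⊔ Submodule.span ℂ {z}) ⊓ l i ≤ M ⊓ l i := by
    rintro x ⟨hxΛ, hxl⟩
    obtain ⟨m, hm, s, hs, rfl⟩ := Submodule.mem_sup.1 hxΛ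
    obtain ⟨c, rfl⟩ := Submodule.mem_span_singleton.1 hs
    rcases eq_or_ne c 0 with rfl | hc
    · exact Submodule.mem_inf.2 ⟨by simpa using hm, hxl⟩
    · exfalso
      apply hz
      have hmem : (m + c • z) - m ∈ M ⊔ l i :=
        sub_mem (Submodule.mem_sup_right hxl) (Submodule.mem_sup_left hm)
      have := Submodule.smul_mem (M ⊔ l i) c⁻¹ hmem
      rwa [add_sub_cancel_left, smul_smul, inv_mul_cancel₀ hc, one_smul] at this
  intro hbot
  have hΛmeets : ∀ j, j ≠ i → (M ⊔ Submodule.span ℂ {z}) ⊓ l j ≠ ⊥ := fun j hj hb =>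
    h j hj (le_bot_iff.1 (le_trans (inf_le_inf_right (l j) le_sup_left) hb.le))
  exact hsp i _ hΛ hΛmeets (le_bot_iff.1 (le_trans hkey hbot.le))

/-- If every 2-plane through `u` meeting `ls` meets `lt`, and `u ∉ ls`, `u ∉ lt`, then
`ls ≤ lt ⊔ span {u}`. -/
private lemma crux {u : Fin 5 → ℂ} (hu : u ≠ 0) {ls lt : Submodule ℂ (Fin 5 → ℂ)}
    (hus : u ∉ ls) (hut : u ∉ lt)
    (H : ∀ M : Submodule ℂ (Fin 5 → ℂ), finrank ℂ M = 2 → u ∈ M → M ⊓ ls ≠ ⊥ →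
      M ⊓ lt ≠ ⊥) :
    ls ≤ lt ⊔ Submodule.span ℂ {u} := by
  intro x hx
  rcases eq_or_ne x 0 with rfl | hx0
  · exact Submodule.zero_mem _
  have hxu : x ∉ Submodule.span ℂ {u} := by
    intro h
    obtain ⟨c, rfl⟩ := Submodule.mem_span_singleton.1 h
    have hc : c ≠ 0 := fun h => hx0 (by simp [h])
    apply hus
    have := Submodule.smul_mem ls c⁻¹ hx
    rwa [smul_smul, inv_mul_cancel₀ hc, one_smul] at this
  have hM2 : finrank ℂ (Submodule.span ℂ {u, x} : Submodule ℂ (Fin 5 → ℂ)) = 2 :=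
    span_pair_dim hu hxu
  have huM : u ∈ Submodule.span ℂ ({u, x} : Set (Fin 5 → ℂ)) :=
    Submodule.subset_span (Set.mem_insert _ _)
  have hxM : x ∈ Submodule.span ℂ ({u, x} : Set (Fin 5 → ℂ)) :=
    Submodule.subset_span (Set.mem_insert_of_mem _ rfl)
  have hsM : Submodule.span ℂ ({u, x} : Set (Fin 5 → ℂ)) ⊓ ls ≠ ⊥ :=
    (Submodule.ne_bot_iff _).2 ⟨x, Submodule.mem_inf.2 ⟨hxM, hx⟩, hx0⟩
  obtain ⟨w, hw, hw0⟩ :=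
    Submodule.exists_mem_ne_zero_of_ne_bot (H _ hM2 huM hsM)
  obtain ⟨hwM, hwt⟩ := Submodule.mem_inf.1 hw
  obtain ⟨a, b, rfl⟩ := Submodule.mem_span_pair.1 hwM
  have hb : b ≠ 0 := by
    rintro rfl
    have ha : a ≠ 0 := by
      rintro rfl
      simp at hw0
    apply hut
    have := Submodule.smul_mem lt a⁻¹ (by simpa using hwt)
    rwa [smul_smul, inv_mul_cancel₀ ha, one_smul] at this
  have hxeq : x = b⁻¹ • ((a • u + b • x) - a • u) := by
    rw [add_sub_cancel_left, smul_smul, inv_mul_cancel₀ hb, one_smul]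
  rw [hxeq]
  exact Submodule.smul_mem _ _ (sub_mem (Submodule.mem_sup_left hwt)
    (Submodule.mem_sup_right (Submodule.smul_mem _ _ (Submodule.mem_span_singleton_self u))))

/-- If every 2-plane through `u` meets `lt` (2-dimensional) with `u ∉ lt`: contradiction. -/
private lemma crux0 {u : Fin 5 → ℂ} (hu : u ≠ 0) {lt : Submodule ℂ (Fin 5 → ℂ)}
    (hlt : finrank ℂ lt = 2) (hut : u ∉ lt)
    (H : ∀ M : Submodule ℂ (Fin 5 → ℂ), finrank ℂ M = 2 → u ∈ M → M ⊓ lt ≠ ⊥) :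
    False := by
  have hV : finrank ℂ (Fin 5 → ℂ) = 5 := by simp
  have hA := Submodule.finrank_sup_add_finrank_inf_eq lt (Submodule.span ℂ {u})
  obtain ⟨z, hz⟩ : ∃ z, z ∉ lt ⊔ Submodule.span ℂ {u} := by
    by_contra hc
    push_neg at hc
    have htop : lt ⊔ Submodule.span ℂ {u} = ⊤ := eq_top_iff.2 fun x _ => hc x
    rw [htop, finrank_top, hV, hlt, finrank_span_singleton hu] at hA
    have hle : finrank ℂ (lt ⊓ Submodule.span ℂ {u} : Submodule ℂ (Fin 5 → ℂ)) ≤ 1 := by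
      have := Submodule.finrank_mono (inf_le_right : lt ⊓ Submodule.span ℂ {u} ≤ _)
      rwa [finrank_span_singleton hu] at this
    omega
  have hzu : z ∉ Submodule.span ℂ {u} := fun h => hz (Submodule.mem_sup_right h)
  have hM2 : finrank ℂ (Submodule.span ℂ {u, z} : Submodule ℂ (Fin 5 → ℂ)) = 2 :=
    span_pair_dim hu hzu
  have huM : u ∈ Submodule.span ℂ ({u, z} : Set (Fin 5 → ℂ)) :=
    Submodule.subset_span (Set.mem_insert _ _)
  obtain ⟨w, hw, hw0⟩ := Submodule.exists_mem_ne_zero_of_ne_bot (H _ hM2 huM)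
  obtain ⟨hwM, hwt⟩ := Submodule.mem_inf.1 hw
  obtain ⟨a, b, rfl⟩ := Submodule.mem_span_pair.1 hwM
  have hb : b ≠ 0 := by
    rintro rfl
    have ha : a ≠ 0 := by
      rintro rfl
      simp at hw0
    apply hut
    have := Submodule.smul_mem lt a⁻¹ (by simpa using hwt)
    rwa [smul_smul, inv_mul_cancel₀ ha, one_smul] at this
  apply hz
  have hzeq : z = b⁻¹ • ((a • u + b • z) - a • u) := by
    rw [add_sub_cancel_left, smul_smul, inv_mul_cancel₀ hb, one_smul]
  rw [hzeq]
  exact Submodule.smul_mem _ _ (sub_mem (Submodule.mem_sup_left hwt)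
    (Submodule.mem_sup_right (Submodule.smul_mem _ _ (Submodule.mem_span_singleton_self u))))

/-- Four distinct lines in `ℙ⁴` spanning a 3-plane, in special position, with `l₁, l₂`
meeting at a point `P` not lying on `l₃`: then `l₃, l₄` meet at a point `P' ≠ P` and the
2-planes `⟨l₁,l₂⟩` and `⟨l₃,l₄⟩` intersect exactly along the line `PP'`. -/
theorem four_lines_two_pairs_meeting
    (l : Fin 4 → Submodule ℂ (Fin 5 → ℂ))
    (hl : ∀ i, finrank ℂ (l i) = 2)
    (hd : Function.Injective l)
    (hspan : finrank ℂ ((⨆ i, l i) : Submodule ℂ (Fin 5 → ℂ)) = 4)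
    (hP : finrank ℂ ((l 0 ⊓ l 1) : Submodule ℂ (Fin 5 → ℂ)) = 1)
    (hP3 : ¬ (l 0 ⊓ l 1) ≤ l 2)
    (hsp : SpecialPosition l) :
    finrank ℂ ((l 2 ⊓ l 3) : Submodule ℂ (Fin 5 → ℂ)) = 1 ∧
    l 2 ⊓ l 3 ≠ l 0 ⊓ l 1 ∧
    (l 0 ⊔ l 1) ⊓ (l 2 ⊔ l 3) = (l 0 ⊓ l 1) ⊔ (l 2 ⊓ l 3) := by
  have hsp2 := sp2 l hl hsp
  -- the point p spanning l 0 ⊓ l 1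
  obtain ⟨p, hpmem, hp0⟩ := Submodule.exists_mem_ne_zero_of_ne_bot
    (show l 0 ⊓ l 1 ≠ ⊥ by intro h; rw [h, finrank_bot] at hP; omega)
  have hspanp : Submodule.span ℂ {p} = l 0 ⊓ l 1 :=
    Submodule.eq_of_le_of_finrank_le ((Submodule.span_singleton_le_iff_mem _ _).2 hpmem)
      (le_of_eq (by rw [hP, finrank_span_singleton hp0]))
  have hpl0 : p ∈ l 0 := hpmem.1
  have hpl1 : p ∈ l 1 := hpmem.2
  have hp2 : p ∉ l 2 := fun h => hP3 (hspanp ▸ (Submodule.span_singleton_le_iff_mem _ _).2 h)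
  -- p does not lie on l 3 either
  have hp3 : p ∉ l 3 := by
    intro hmem
    refine crux0 hp0 (hl 2) hp2 ?_
    intro M hM hpM
    refine hsp2 2 M hM ?_
    intro j hj
    fin_cases j
    · exact (Submodule.ne_bot_iff _).2 ⟨p, Submodule.mem_inf.2 ⟨hpM, hpl0⟩, hp0⟩
    · exact (Submodule.ne_bot_iff _).2 ⟨p, Submodule.mem_inf.2 ⟨hpM, hpl1⟩, hp0⟩
    · exact absurd rfl hj
    · exact (Submodule.ne_bot_iff _).2 ⟨p, Submodule.mem_inf.2 ⟨hpM, hmem⟩, hp0⟩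
  -- key inclusion from special position
  have hl3le : l 3 ≤ l 2 ⊔ Submodule.span ℂ {p} := by
    refine crux hp0 hp3 hp2 ?_
    intro M hM hpM hM3
    refine hsp2 2 M hM ?_
    intro j hj
    fin_cases j
    · exact (Submodule.ne_bot_iff _).2 ⟨p, Submodule.mem_inf.2 ⟨hpM, hpl0⟩, hp0⟩
    · exact (Submodule.ne_bot_iff _).2 ⟨p, Submodule.mem_inf.2 ⟨hpM, hpl1⟩, hp0⟩
    · exact absurd rfl hj
    · exact hM3
  -- dimension counts for l 2 ⊔ l 3
  have hA := Submodule.finrank_sup_add_finrank_inf_eq (l 2) (Submodule.span ℂ {p})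
  rw [hl 2, finrank_span_singleton hp0] at hA
  have hAle : finrank ℂ (l 2 ⊔ Submodule.span ℂ {p} : Submodule ℂ (Fin 5 → ℂ)) ≤ 3 := by
    omega
  have hsup23le : l 2 ⊔ l 3 ≤ l 2 ⊔ Submodule.span ℂ {p} := sup_le le_sup_left hl3le
  have hB := Submodule.finrank_sup_add_finrank_inf_eq (l 2) (l 3)
  rw [hl 2, hl 3] at hB
  have hBle : finrank ℂ (l 2 ⊔ l 3 : Submodule ℂ (Fin 5 → ℂ)) ≤ 3 :=
    le_trans (Submodule.finrank_mono hsup23le) hAle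
  have hinfle : finrank ℂ ((l 2 ⊓ l 3) : Submodule ℂ (Fin 5 → ℂ)) ≤ 2 := by
    have := Submodule.finrank_mono (inf_le_left : l 2 ⊓ l 3 ≤ l 2)
    rwa [hl 2] at this
  -- Goal 1
  have goal1 : finrank ℂ ((l 2 ⊓ l 3) : Submodule ℂ (Fin 5 → ℂ)) = 1 := by
    by_contra hne
    have h2eq : finrank ℂ ((l 2 ⊓ l 3) : Submodule ℂ (Fin 5 → ℂ)) = 2 := by omega
    have e1 : l 2 ⊓ l 3 = l 2 :=
      Submodule.eq_of_le_of_finrank_le inf_le_left (le_of_eq (by rw [hl 2, h2eq]))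
    have e2 : l 2 = l 3 :=
      Submodule.eq_of_le_of_finrank_le (e1 ▸ inf_le_right) (le_of_eq (by rw [hl 2, hl 3]))
    exact absurd (hd e2) (by decide)
  -- Goal 2
  have goal2 : l 2 ⊓ l 3 ≠ l 0 ⊓ l 1 := by
    intro h
    exact hP3 (by rw [← h]; exact inf_le_left)
  refine ⟨goal1, goal2, ?_⟩
  -- the point p' spanning l 2 ⊓ l 3
  obtain ⟨p', hp'mem, hp'0⟩ := Submodule.exists_mem_ne_zero_of_ne_bot
    (show l 2 ⊓ l 3 ≠ ⊥ by intro h; rw [h, finrank_bot] at goal1; omega)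
  have hspanp' : Submodule.span ℂ {p'} = l 2 ⊓ l 3 :=
    Submodule.eq_of_le_of_finrank_le ((Submodule.span_singleton_le_iff_mem _ _).2 hp'mem)
      (le_of_eq (by rw [goal1, finrank_span_singleton hp'0]))
  have hp'l2 : p' ∈ l 2 := hp'mem.1
  have hp'l3 : p' ∈ l 3 := hp'mem.2
  -- p ∈ l 2 ⊔ l 3
  have hS3 : finrank ℂ (l 2 ⊔ l 3 : Submodule ℂ (Fin 5 → ℂ)) = 3 := by omega
  have hSeq : l 2 ⊔ l 3 = l 2 ⊔ Submodule.span ℂ {p} :=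
    Submodule.eq_of_le_of_finrank_le hsup23le (by rw [hS3]; exact hAle)
  have hpS : p ∈ l 2 ⊔ l 3 := by
    rw [hSeq]
    exact Submodule.mem_sup_right (Submodule.mem_span_singleton_self p)
  -- p' ∈ l 0 ⊔ l 1
  have hC := Submodule.finrank_sup_add_finrank_inf_eq (l 0) (l 1)
  rw [hl 0, hl 1, hP] at hC
  have hPi3 : finrank ℂ (l 0 ⊔ l 1 : Submodule ℂ (Fin 5 → ℂ)) = 3 := by omega
  have hp'Pi : p' ∈ l 0 ⊔ l 1 := by
    by_cases h0 : p' ∈ l 0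
    · exact Submodule.mem_sup_left h0
    by_cases h1 : p' ∈ l 1
    · exact Submodule.mem_sup_right h1
    have hle : l 1 ≤ l 0 ⊔ Submodule.span ℂ {p'} := by
      refine crux hp'0 h1 h0 ?_
      intro M hM hp'M hM1
      refine hsp2 0 M hM ?_
      intro j hj
      fin_cases j
      · exact absurd rfl hj
      · exact hM1
      · exact (Submodule.ne_bot_iff _).2 ⟨p', Submodule.mem_inf.2 ⟨hp'M, hp'l2⟩, hp'0⟩
      · exact (Submodule.ne_bot_iff _).2 ⟨p', Submodule.mem_inf.2 ⟨hp'M, hp'l3⟩, hp'0⟩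
    have hD := Submodule.finrank_sup_add_finrank_inf_eq (l 0) (Submodule.span ℂ {p'})
    rw [hl 0, finrank_span_singleton hp'0] at hD
    have hPieq : l 0 ⊔ l 1 = l 0 ⊔ Submodule.span ℂ {p'} :=
      Submodule.eq_of_le_of_finrank_le (sup_le le_sup_left hle) (by rw [hPi3]; omega)
    rw [hPieq]
    exact Submodule.mem_sup_right (Submodule.mem_span_singleton_self p')
  -- total span
  have hsupall : (l 0 ⊔ l 1) ⊔ (l 2 ⊔ l 3) = ⨆ i, l i := by
    apply le_antisymm
    · exact sup_le (sup_le (le_iSup l 0) (le_iSup l 1)) (sup_le (le_iSup l 2) (le_iSup l 3))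
    · refine iSup_le fun i => ?_
      fin_cases i
      · exact le_sup_of_le_left le_sup_left
      · exact le_sup_of_le_left le_sup_right
      · exact le_sup_of_le_right le_sup_left
      · exact le_sup_of_le_right le_sup_right
  have hE := Submodule.finrank_sup_add_finrank_inf_eq (l 0 ⊔ l 1) (l 2 ⊔ l 3)
  rw [hsupall, hspan, hPi3, hS3] at hE
  -- finrank of RHS
  have hppbot : Submodule.span ℂ {p} ⊓ Submodule.span ℂ {p'} = ⊥ := by
    rw [eq_bot_iff]
    rintro w ⟨hw1, hw2⟩
    obtain ⟨c, rfl⟩ := Submodule.mem_span_singleton.1 hw1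
    rcases eq_or_ne c 0 with rfl | hc
    · simp
    · exfalso
      apply goal2
      have hpin : p ∈ Submodule.span ℂ {p'} := by
        have := Submodule.smul_mem _ c⁻¹ hw2
        rwa [smul_smul, inv_mul_cancel₀ hc, one_smul] at this
      have hle : Submodule.span ℂ {p} ≤ Submodule.span ℂ {p'} :=
        (Submodule.span_singleton_le_iff_mem _ _).2 hpin
      have heq : Submodule.span ℂ {p} = Submodule.span ℂ {p'} :=
        Submodule.eq_of_le_of_finrank_le hle
          (le_of_eq (by rw [finrank_span_singleton hp0, finrank_span_singleton hp'0]))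
      rw [hspanp, hspanp'] at heq
      exact heq.symm
  have hR := Submodule.finrank_sup_add_finrank_inf_eq (Submodule.span ℂ {p})
    (Submodule.span ℂ {p'})
  rw [hppbot, finrank_bot, finrank_span_singleton hp0, finrank_span_singleton hp'0] at hR
  -- the inclusion RHS ≤ LHS
  have hRle : (l 0 ⊓ l 1) ⊔ (l 2 ⊓ l 3) ≤ (l 0 ⊔ l 1) ⊓ (l 2 ⊔ l 3) := by
    apply sup_le
    · refine le_inf (le_trans inf_le_left le_sup_left) ?_
      rw [← hspanp]
      exact (Submodule.span_singleton_le_iff_mem _ _).2 hpS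
    · refine le_inf ?_ (le_trans inf_le_left le_sup_left)
      rw [← hspanp']
      exact (Submodule.span_singleton_le_iff_mem _ _).2 hp'Pi
  have hfr : finrank ℂ ((l 0 ⊓ l 1) ⊔ (l 2 ⊓ l 3) : Submodule ℂ (Fin 5 → ℂ)) = 2 := by
    rw [← hspanp, ← hspanp']
    omega
  exact (Submodule.eq_of_le_of_finrank_le hRle (by rw [hfr]; omega)).symm
end

section
/- Let l_1,...,l_5 be five lines in P^4 in special position with respect to 2-planes, satisfying the regularity condition (R) that the number n(l_i) of other lines meeting l_i and the maximal number m(l_i) of other lines coplanar with l_i are independent of i. If some pair of the lines spans a 2-plane (i.e. some two of them meet), then either all five lines are coplanar or all five lines pass through a common point. -/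
open Module

section CombinatorialLemmas

lemma fin5_cover (a b c d e j : Fin 5) (h1 : a ≠ b) (h2 : a ≠ c) (h3 : a ≠ d) (h4 : a ≠ e)
    (h5 : b ≠ c) (h6 : b ≠ d) (h7 : b ≠ e) (h8 : c ≠ d) (h9 : c ≠ e) (h10 : d ≠ e) :
    j = a ∨ j = b ∨ j = c ∨ j = d ∨ j = e := by
  revert h1 h2 h3 h4 h5 h6 h7 h8 h9 h10; revert a b c d e j; decide

lemma fin5_fresh (a b c d : Fin 5) : ∃ u : Fin 5, u ≠ a ∧ u ≠ b ∧ u ≠ c ∧ u ≠ d := by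
  revert a b c d; decide

lemma pair_of_mem {α : Type*} [DecidableEq α] {s : Finset α} {u : α}
    (h2 : s.card = 2) (hu : u ∈ s) : ∃ x, x ≠ u ∧ s = {u, x} := by
  obtain ⟨p, q, hpq, rfl⟩ := Finset.card_eq_two.mp h2
  rcases Finset.mem_insert.mp hu with rfl | hq
  · exact ⟨q, hpq.symm, rfl⟩
  · rcases Finset.mem_singleton.mp hq with rfl
    exact ⟨p, hpq, Finset.pair_comm p u⟩

lemma mem_pair_cases {α : Type*} [DecidableEq α] {s : Finset α} {u v w : α}
    (hs : s = {u, v}) (h : w ∈ s) : w = u ∨ w = v := by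
  rw [hs] at h
  rcases Finset.mem_insert.mp h with h' | h'
  · exact Or.inl h'
  · exact Or.inr (Finset.mem_singleton.mp h')

lemma notMem_pair {α : Type*} [DecidableEq α] {s : Finset α} {u v w : α}
    (hs : s = {u, v}) (h : w ∈ s) (h1 : w ≠ u) (h2 : w ≠ v) : False := by
  rcases mem_pair_cases hs h with h' | h'
  · exact h1 h'
  · exact h2 h'

lemma notMem_single {α : Type*} [DecidableEq α] {s : Finset α} {u w : α}
    (hs : s = {u}) (h : w ∈ s) (h1 : w ≠ u) : False := by
  rw [hs, Finset.mem_singleton] at h; exact h1 h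

lemma one_regular_false (R : Fin 5 → Fin 5 → Prop) (hsym : ∀ i j, R i j → R j i)
    (N : Fin 5 → Finset (Fin 5)) (hN : ∀ i j, j ∈ N i ↔ j ≠ i ∧ R i j)
    (hdeg : ∀ i, (N i).card = 1) : False := by
  have hsymN : ∀ i j, j ∈ N i → i ∈ N j := by
    intro i j h
    rw [hN] at h ⊢
    exact ⟨h.1.symm, hsym i j h.2⟩
  have single : ∀ i j, j ∈ N i → N i = {j} := by
    intro i j h
    obtain ⟨z, hz⟩ := Finset.card_eq_one.mp (hdeg i)
    rw [hz] at h ⊢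
    rw [Finset.mem_singleton.mp h]
  obtain ⟨a, ha⟩ := Finset.card_eq_one.mp (hdeg 0)
  have haN0 : a ∈ N 0 := by rw [ha]; simp
  have ha0 : a ≠ 0 := ((hN 0 a).mp haN0).1
  have hNa : N a = {0} := single a 0 (hsymN 0 a haN0)
  obtain ⟨b, hb0, hba, -, -⟩ := fin5_fresh 0 a a a
  obtain ⟨x, hx⟩ := Finset.card_eq_one.mp (hdeg b)
  have hxNb : x ∈ N b := by rw [hx]; simp
  have hxb : x ≠ b := ((hN b x).mp hxNb).1
  have hbNx : b ∈ N x := hsymN b x hxNb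
  have hx0 : x ≠ 0 := fun h => notMem_single ha (h ▸ hbNx) hba
  have hxa : x ≠ a := fun h => notMem_single hNa (h ▸ hbNx) hb0
  have hNx : N x = {b} := single x b hbNx
  obtain ⟨c, hc0, hca, hcb, hcx⟩ := fin5_fresh 0 a b x
  obtain ⟨y, hy⟩ := Finset.card_eq_one.mp (hdeg c)
  have hyNc : y ∈ N c := by rw [hy]; simp
  have hyc : y ≠ c := ((hN c y).mp hyNc).1
  have hcNy : c ∈ N y := hsymN c y hyNc
  have hy0 : y ≠ 0 := fun h => notMem_single ha (h ▸ hcNy) hca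
  have hya : y ≠ a := fun h => notMem_single hNa (h ▸ hcNy) hc0
  have hyb : y ≠ b := fun h => notMem_single hx (h ▸ hcNy) hcx
  have hyx : y ≠ x := fun h => notMem_single hNx (h ▸ hcNy) hcb
  rcases fin5_cover 0 a b x c y ha0.symm hb0.symm hx0.symm hc0.symm hba.symm hxa.symm
      hca.symm hxb.symm hcb.symm hcx.symm with h | h | h | h | h
  exacts [hy0 h, hya h, hyb h, hyx h, hyc h]

lemma three_regular_false (R : Fin 5 → Fin 5 → Prop) (hsym : ∀ i j, R i j → R j i)
    (N : Fin 5 → Finset (Fin 5)) (hN : ∀ i j, j ∈ N i ↔ j ≠ i ∧ R i j)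
    (hdeg : ∀ i, (N i).card = 3) : False := by
  classical
  refine one_regular_false (fun i j => ¬ R i j) (fun i j h h' => h (hsym j i h'))
    (fun i => (Finset.univ.erase i) \ N i) (fun i j => ?_) (fun i => ?_)
  · simp only [Finset.mem_sdiff, Finset.mem_erase, Finset.mem_univ, and_true, hN]
    constructor
    · rintro ⟨hji, h2⟩
      exact ⟨hji, fun hr => h2 ⟨hji, hr⟩⟩
    · rintro ⟨hji, h2⟩
      exact ⟨hji, fun hmem => h2 hmem.2⟩
  · have hsub : N i ⊆ Finset.univ.erase i := by
      intro j hj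
      exact Finset.mem_erase.mpr ⟨((hN i j).mp hj).1, Finset.mem_univ j⟩
    rw [Finset.card_sdiff_of_subset hsub, hdeg i]
    have : (Finset.univ.erase i).card = 4 := by
      rw [Finset.card_erase_of_mem (Finset.mem_univ i)]
      simp
    omega

lemma two_regular_cycle (R : Fin 5 → Fin 5 → Prop) (hsym : ∀ i j, R i j → R j i)
    (N : Fin 5 → Finset (Fin 5)) (hN : ∀ i j, j ∈ N i ↔ j ≠ i ∧ R i j)
    (hdeg : ∀ i, (N i).card = 2) :
    ∃ v0 v1 v2 v3 v4 : Fin 5,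
      (∀ j : Fin 5, j = v0 ∨ j = v1 ∨ j = v2 ∨ j = v3 ∨ j = v4) ∧
      R v0 v1 ∧ R v1 v2 ∧ R v2 v3 ∧ R v3 v4 ∧ R v4 v0 ∧
      ¬ R v0 v2 ∧ ¬ R v1 v3 ∧ ¬ R v2 v4 ∧ ¬ R v3 v0 ∧ ¬ R v4 v1 := by
  have hsymN : ∀ i j, j ∈ N i → i ∈ N j := by
    intro i j h
    rw [hN] at h ⊢
    exact ⟨h.1.symm, hsym i j h.2⟩
  obtain ⟨a, b, hab, hN0⟩ := Finset.card_eq_two.mp (hdeg 0)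
  have haN0 : a ∈ N 0 := by rw [hN0]; simp
  have hbN0 : b ∈ N 0 := by rw [hN0]; simp
  have ha0 : a ≠ 0 := ((hN 0 a).mp haN0).1
  have hb0 : b ≠ 0 := ((hN 0 b).mp hbN0).1
  have hR0a : R 0 a := ((hN 0 a).mp haN0).2
  have hR0b : R 0 b := ((hN 0 b).mp hbN0).2
  have h0Na : (0 : Fin 5) ∈ N a := hsymN 0 a haN0
  have h0Nb : (0 : Fin 5) ∈ N b := hsymN 0 b hbN0
  obtain ⟨c, hc0, hNa⟩ := pair_of_mem (hdeg a) h0Na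
  have hcNa : c ∈ N a := by rw [hNa]; simp
  have hca : c ≠ a := ((hN a c).mp hcNa).1
  have hRac : R a c := ((hN a c).mp hcNa).2
  have haNc : a ∈ N c := hsymN a c hcNa
  have hcb : c ≠ b := by
    intro hceqb
    have haNb : a ∈ N b := hceqb ▸ hsymN a c hcNa
    have hNb : ({0, a} : Finset (Fin 5)) = N b := by
      apply Finset.eq_of_subset_of_card_le
      · intro x hx
        rcases Finset.mem_insert.mp hx with h' | h'
        · rw [h']; exact h0Nb
        · rw [Finset.mem_singleton.mp h']; exact haNb
      · rw [hdeg b, Finset.card_insert_of_notMem (by simp [ha0.symm]), Finset.card_singleton]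
    obtain ⟨e, he0, hea, heb, -⟩ := fin5_fresh 0 a b b
    obtain ⟨p, q, hpq, hNe⟩ := Finset.card_eq_two.mp (hdeg e)
    have excl : ∀ z, z ∈ N e → z ≠ 0 ∧ z ≠ a ∧ z ≠ b ∧ z ≠ e := by
      intro z hz
      have heNz : e ∈ N z := hsymN e z hz
      refine ⟨?_, ?_, ?_, ((hN e z).mp hz).1⟩
      · intro h
        exact notMem_pair hN0 (h ▸ heNz) hea heb
      · intro h
        exact notMem_pair hNa (h ▸ heNz) he0 (hceqb ▸ heb)
      · intro h
        exact notMem_pair hNb.symm (h ▸ heNz) he0 hea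
    have hp : p ∈ N e := by rw [hNe]; simp
    have hq : q ∈ N e := by rw [hNe]; simp
    obtain ⟨hp0, hpa, hpb, hpe⟩ := excl p hp
    obtain ⟨hq0, hqa, hqb, hqe⟩ := excl q hq
    rcases fin5_cover 0 a b e p q ha0.symm hb0.symm he0.symm hp0.symm hab hea.symm
      hpa.symm heb.symm hpb.symm hpe.symm with h | h | h | h | h
    exacts [hq0 h, hqa h, hqb h, hqe h, hpq h.symm]
  obtain ⟨d, hd0, hda, hdb, hdc⟩ := fin5_fresh 0 a b c
  obtain ⟨y, hya, hNc⟩ := pair_of_mem (hdeg c) haNc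
  have hyNc : y ∈ N c := by rw [hNc]; simp
  have hyc : y ≠ c := ((hN c y).mp hyNc).1
  have hRcy : R c y := ((hN c y).mp hyNc).2
  have hcNy : c ∈ N y := hsymN c y hyNc
  have hy0 : y ≠ 0 := fun h => notMem_pair hN0 (h ▸ hcNy) hca hcb
  have hyd : y = b ∨ y = d := by
    rcases fin5_cover 0 a b c d y ha0.symm hb0.symm hc0.symm hd0.symm hab hca.symm
      hda.symm hcb.symm hdb.symm hdc.symm with h | h | h | h | h
    exacts [absurd h hy0, absurd h hya, Or.inl h, absurd h hyc, Or.inr h]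
  rcases hyd with hyb | hyd
  · -- y = b : contradiction
    exfalso
    have hbNc : b ∈ N c := hyb ▸ hyNc
    have hcNb : c ∈ N b := hsymN c b hbNc
    have hNb : ({0, c} : Finset (Fin 5)) = N b := by
      apply Finset.eq_of_subset_of_card_le
      · intro x hx
        rcases Finset.mem_insert.mp hx with h' | h'
        · rw [h']; exact h0Nb
        · rw [Finset.mem_singleton.mp h']; exact hcNb
      · rw [hdeg b, Finset.card_insert_of_notMem (by simp [hc0.symm]), Finset.card_singleton]
    obtain ⟨p, q, hpq, hNd⟩ := Finset.card_eq_two.mp (hdeg d)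
    have hp : p ∈ N d := by rw [hNd]; simp
    have hdNp : d ∈ N p := hsymN d p hp
    have hpd : p ≠ d := ((hN d p).mp hp).1
    have hp0 : p ≠ 0 := fun h => notMem_pair hN0 (h ▸ hdNp) hda hdb
    have hpa : p ≠ a := fun h => notMem_pair hNa (h ▸ hdNp) hd0 hdc
    have hpb : p ≠ b := fun h => notMem_pair hNb.symm (h ▸ hdNp) hd0 hdc
    have hpc : p ≠ c := fun h =>
      notMem_pair hNc (h ▸ hdNp) hda (fun h' => hdb (h'.trans hyb))
    rcases fin5_cover 0 a b c d p ha0.symm hb0.symm hc0.symm hd0.symm hab hca.symm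
      hda.symm hcb.symm hdb.symm hdc.symm with h | h | h | h | h
    exacts [hp0 h, hpa h, hpb h, hpc h, hpd h]
  · -- y = d : build cycle 0 - a - c - d - b - 0
    have hdNc : d ∈ N c := hyd ▸ hyNc
    have hRcd : R c d := hyd ▸ hRcy
    have hcNd : c ∈ N d := hsymN c d hdNc
    obtain ⟨z, hzc, hNd⟩ := pair_of_mem (hdeg d) hcNd
    have hzNd : z ∈ N d := by rw [hNd]; simp
    have hzd : z ≠ d := ((hN d z).mp hzNd).1
    have hdNz : d ∈ N z := hsymN d z hzNd
    have hz0 : z ≠ 0 := fun h => notMem_pair hN0 (h ▸ hdNz) hda hdb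
    have hza : z ≠ a := fun h => notMem_pair hNa (h ▸ hdNz) hd0 hdc
    have hzb : z = b := by
      rcases fin5_cover 0 a b c d z ha0.symm hb0.symm hc0.symm hd0.symm hab hca.symm
        hda.symm hcb.symm hdb.symm hdc.symm with h | h | h | h | h
      exacts [absurd h hz0, absurd h hza, h, absurd h hzc, absurd h hzd]
    have hbNd : b ∈ N d := hzb ▸ hzNd
    have hRdb : R d b := ((hN d b).mp hbNd).2
    have hdNb : d ∈ N b := hsymN d b hbNd
    have hNb : ({0, d} : Finset (Fin 5)) = N b := by
      apply Finset.eq_of_subset_of_card_le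
      · intro x hx
        rcases Finset.mem_insert.mp hx with h' | h'
        · rw [h']; exact h0Nb
        · rw [Finset.mem_singleton.mp h']; exact hdNb
      · rw [hdeg b, Finset.card_insert_of_notMem (by simp [hd0.symm]), Finset.card_singleton]
    refine ⟨0, a, c, d, b, ?_, hR0a, hRac, hRcd, hRdb, hsym 0 b hR0b, ?_, ?_, ?_, ?_, ?_⟩
    · intro j
      exact fin5_cover 0 a c d b j ha0.symm hc0.symm hd0.symm hb0.symm hca.symm hda.symm
        hab hdc.symm hcb hdb
    · intro h
      exact notMem_pair hN0 ((hN 0 c).mpr ⟨hc0, h⟩) hca hcb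
    · intro h
      exact notMem_pair hNa ((hN a d).mpr ⟨hda, h⟩) hd0 hdc
    · intro h
      exact notMem_pair hNc ((hN c b).mpr ⟨hcb.symm, h⟩) (fun h' => hab h'.symm)
        (fun h' => hdb (h'.trans hyd).symm)
    · intro h
      exact notMem_pair hNd ((hN d 0).mpr ⟨hd0.symm, h⟩) hc0.symm
        (fun h' => hb0 (h'.trans hzb).symm)
    · intro h
      exact notMem_pair hNb.symm ((hN b a).mpr ⟨hab, h⟩) ha0 hda.symm

end CombinatorialLemmas

section GeometricLemmas

lemma rank_pos' {p : Submodule ℂ (Fin 5 → ℂ)} (h : p ≠ ⊥) : 1 ≤ finrank ℂ p := by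
  obtain ⟨x, hx, hx0⟩ := (Submodule.ne_bot_iff p).mp h
  calc 1 = finrank ℂ (ℂ ∙ x) := (finrank_span_singleton hx0).symm
    _ ≤ finrank ℂ p := Submodule.finrank_mono ((Submodule.span_singleton_le_iff_mem x p).mpr hx)

lemma rank3_meets {p q : Submodule ℂ (Fin 5 → ℂ)} (hp : finrank ℂ p = 2)
    (hq : finrank ℂ q = 2)
    (h3 : finrank ℂ ((p ⊔ q : Submodule ℂ (Fin 5 → ℂ))) = 3) : p ⊓ q ≠ ⊥ := by
  intro hb
  have h := Submodule.finrank_sup_add_finrank_inf_eq p q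
  rw [hp, hq, h3, hb, finrank_bot] at h
  omega

lemma disj_of_mem' {A B : Submodule ℂ (Fin 5 → ℂ)} {x y : Fin 5 → ℂ} (hx : x ∈ A) (hy : y ∈ B)
    (hAB : A ⊓ B = ⊥) : (ℂ ∙ x) ⊓ (ℂ ∙ y) = ⊥ := by
  rw [eq_bot_iff, ← hAB]
  exact inf_le_inf ((Submodule.span_singleton_le_iff_mem x A).mpr hx)
    ((Submodule.span_singleton_le_iff_mem y B).mpr hy)

lemma rank2_span_pair' {x y : Fin 5 → ℂ} (hx : x ≠ 0) (hy : y ≠ 0)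
    (hdisj : (ℂ ∙ x) ⊓ (ℂ ∙ y) = ⊥) :
    finrank ℂ (Submodule.span ℂ {x, y}) = 2 := by
  rw [show ({x, y} : Set (Fin 5 → ℂ)) = insert x {y} from rfl, Submodule.span_insert]
  have h := Submodule.finrank_sup_add_finrank_inf_eq (ℂ ∙ x) (ℂ ∙ y)
  rw [hdisj, finrank_bot, finrank_span_singleton hx, finrank_span_singleton hy] at h
  omega

lemma pairwise_meet (l : Fin 5 → Submodule ℂ (Fin 5 → ℂ))
    (hl : ∀ i, finrank ℂ (l i) = 2) (hd : Function.Injective l)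
    (hall : ∀ i j, i ≠ j → l i ⊓ l j ≠ ⊥) :
    (∃ Λ : Submodule ℂ (Fin 5 → ℂ), finrank ℂ Λ = 3 ∧ ∀ i, l i ≤ Λ) ∨
    (∃ P : Submodule ℂ (Fin 5 → ℂ), finrank ℂ P = 1 ∧ ∀ i, P ≤ l i) := by
  have h01 : (0 : Fin 5) ≠ 1 := by decide
  have hm01 : l 0 ⊓ l 1 ≠ ⊥ := hall 0 1 h01
  have hsum := Submodule.finrank_sup_add_finrank_inf_eq (l 0) (l 1)
  have hP1 : finrank ℂ ((l 0 ⊓ l 1 : Submodule ℂ (Fin 5 → ℂ))) = 1 := by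
    have hpos := rank_pos' hm01
    have hle : finrank ℂ ((l 0 ⊓ l 1 : Submodule ℂ (Fin 5 → ℂ))) ≤ 2 := by
      rw [← hl 0]
      exact Submodule.finrank_mono inf_le_left
    by_contra hne
    have h2 : finrank ℂ ((l 0 ⊓ l 1 : Submodule ℂ (Fin 5 → ℂ))) = 2 := by omega
    have e0 : l 0 ⊓ l 1 = l 0 :=
      Submodule.eq_of_le_of_finrank_le inf_le_left (le_of_eq (by rw [hl 0, h2]))
    have e1 : l 0 ⊓ l 1 = l 1 :=
      Submodule.eq_of_le_of_finrank_le inf_le_right (le_of_eq (by rw [hl 1, h2]))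
    exact h01 (hd (e0.symm.trans e1))
  have hW3 : finrank ℂ ((l 0 ⊔ l 1 : Submodule ℂ (Fin 5 → ℂ))) = 3 := by
    rw [hP1, hl 0, hl 1] at hsum
    omega
  by_cases hWall : ∀ k, l k ≤ l 0 ⊔ l 1
  · exact Or.inl ⟨l 0 ⊔ l 1, hW3, hWall⟩
  push_neg at hWall
  obtain ⟨a, ha⟩ := hWall
  have C1 : ∀ k, ¬ l k ≤ l 0 ⊔ l 1 → l k ⊓ (l 0 ⊔ l 1) = l 0 ⊓ l 1 := by
    intro k hk
    have hk0 : k ≠ 0 := by rintro rfl; exact hk le_sup_left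
    have hk1 : k ≠ 1 := by rintro rfl; exact hk le_sup_right
    have hlt : l k ⊓ (l 0 ⊔ l 1) < l k :=
      lt_of_le_of_ne inf_le_left (fun h => hk (inf_eq_left.mp h))
    have hrk : finrank ℂ ((l k ⊓ (l 0 ⊔ l 1) : Submodule ℂ (Fin 5 → ℂ))) < 2 := by
      rw [← hl k]
      exact Submodule.finrank_lt_finrank_of_lt hlt
    have h0 : l k ⊓ l 0 ≤ l k ⊓ (l 0 ⊔ l 1) := inf_le_inf_left _ le_sup_left
    have h1 : l k ⊓ l 1 ≤ l k ⊓ (l 0 ⊔ l 1) := inf_le_inf_left _ le_sup_right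
    have h0p : 1 ≤ finrank ℂ ((l k ⊓ l 0 : Submodule ℂ (Fin 5 → ℂ))) :=
      rank_pos' (hall k 0 hk0)
    have h1p : 1 ≤ finrank ℂ ((l k ⊓ l 1 : Submodule ℂ (Fin 5 → ℂ))) :=
      rank_pos' (hall k 1 hk1)
    have h0e : l k ⊓ l 0 = l k ⊓ (l 0 ⊔ l 1) :=
      Submodule.eq_of_le_of_finrank_le h0 (by omega)
    have h1e : l k ⊓ l 1 = l k ⊓ (l 0 ⊔ l 1) :=
      Submodule.eq_of_le_of_finrank_le h1 (by omega)
    have hsub : l k ⊓ (l 0 ⊔ l 1) ≤ l 0 ⊓ l 1 := by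
      apply le_inf
      · rw [← h0e]; exact inf_le_right
      · rw [← h1e]; exact inf_le_right
    refine Submodule.eq_of_le_of_finrank_le hsub ?_
    rw [hP1]
    calc 1 ≤ finrank ℂ ((l k ⊓ l 0 : Submodule ℂ (Fin 5 → ℂ))) := h0p
      _ ≤ _ := Submodule.finrank_mono h0
  right
  refine ⟨l 0 ⊓ l 1, hP1, ?_⟩
  intro k
  by_cases hkW : l k ≤ l 0 ⊔ l 1
  · have hka : k ≠ a := by rintro rfl; exact ha hkW
    have hma : l k ⊓ l a ≠ ⊥ := hall k a hka
    have haW : l a ⊓ (l 0 ⊔ l 1) = l 0 ⊓ l 1 := C1 a ha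
    have hsub2 : l k ⊓ l a ≤ l 0 ⊓ l 1 := by
      rw [← haW]
      exact le_inf inf_le_right (le_trans inf_le_left hkW)
    have heq : l k ⊓ l a = l 0 ⊓ l 1 :=
      Submodule.eq_of_le_of_finrank_le hsub2 (by rw [hP1]; exact rank_pos' hma)
    rw [← heq]
    exact inf_le_left
  · rw [← C1 k hkW]
    exact inf_le_left

lemma cycle_contra (l : Fin 5 → Submodule ℂ (Fin 5 → ℂ))
    (hl : ∀ i, finrank ℂ (l i) = 2) (hsp : SpecialPosition l)
    (v0 v1 v2 v3 v4 : Fin 5)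
    (hcov : ∀ j, j = v0 ∨ j = v1 ∨ j = v2 ∨ j = v3 ∨ j = v4)
    (a01 : l v0 ⊓ l v1 ≠ ⊥) (a12 : l v1 ⊓ l v2 ≠ ⊥)
    (a34 : l v3 ⊓ l v4 ≠ ⊥) (a40 : l v4 ⊓ l v0 ≠ ⊥)
    (e02 : l v0 ⊓ l v2 = ⊥) (e13 : l v1 ⊓ l v3 = ⊥)
    (e03 : l v0 ⊓ l v3 = ⊥) (e14 : l v1 ⊓ l v4 = ⊥) : False := by
  obtain ⟨p01, hp01, hp01n⟩ := (Submodule.ne_bot_iff _).mp a01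
  obtain ⟨p12, hp12, hp12n⟩ := (Submodule.ne_bot_iff _).mp a12
  obtain ⟨p34, hp34, hp34n⟩ := (Submodule.ne_bot_iff _).mp a34
  obtain ⟨p40, hp40, hp40n⟩ := (Submodule.ne_bot_iff _).mp a40
  obtain ⟨hp01a, hp01b⟩ := Submodule.mem_inf.mp hp01
  obtain ⟨hp12a, hp12b⟩ := Submodule.mem_inf.mp hp12
  obtain ⟨hp34a, hp34b⟩ := Submodule.mem_inf.mp hp34
  obtain ⟨hp40a, hp40b⟩ := Submodule.mem_inf.mp hp40
  have L0eq : l v0 = Submodule.span ℂ {p01, p40} := by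
    have hle : Submodule.span ℂ {p01, p40} ≤ l v0 := by
      rw [Submodule.span_le]
      rintro x hx
      simp only [Set.mem_insert_iff, Set.mem_singleton_iff] at hx
      rcases hx with rfl | rfl
      · exact hp01a
      · exact hp40b
    have hr : finrank ℂ (Submodule.span ℂ {p01, p40}) = 2 :=
      rank2_span_pair' hp01n hp40n (disj_of_mem' hp01b hp40a e14)
    exact (Submodule.eq_of_le_of_finrank_le hle (le_of_eq (by rw [hr, hl v0]))).symm
  set Λ0 : Submodule ℂ (Fin 5 → ℂ) := Submodule.span ℂ {p12, p34} with hΛ0def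
  have hp12Λ : p12 ∈ Λ0 := Submodule.subset_span (by simp)
  have hp34Λ : p34 ∈ Λ0 := Submodule.subset_span (by simp)
  have hΛ0r : finrank ℂ Λ0 = 2 :=
    rank2_span_pair' hp12n hp34n (disj_of_mem' hp12a hp34a e13)
  have hΛ0L0 : Λ0 ⊓ l v0 = ⊥ := by
    rw [eq_bot_iff]
    intro x hx
    obtain ⟨hx1, hx2⟩ := Submodule.mem_inf.mp hx
    obtain ⟨c, d, hcd⟩ := Submodule.mem_span_pair.mp hx1
    rw [L0eq] at hx2
    obtain ⟨e, f, hef⟩ := Submodule.mem_span_pair.mp hx2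
    have key : c • p12 - e • p01 = f • p40 - d • p34 := by
      rw [sub_eq_sub_iff_add_eq_add, hcd, ← hef]
      exact add_comm _ _
    have hu1 : c • p12 - e • p01 ∈ l v1 :=
      Submodule.sub_mem _ (Submodule.smul_mem _ _ hp12a) (Submodule.smul_mem _ _ hp01b)
    have hu4 : c • p12 - e • p01 ∈ l v4 := by
      rw [key]
      exact Submodule.sub_mem _ (Submodule.smul_mem _ _ hp40a) (Submodule.smul_mem _ _ hp34b)
    have hu0 : c • p12 - e • p01 = 0 := by
      have hm : c • p12 - e • p01 ∈ l v1 ⊓ l v4 := Submodule.mem_inf.mpr ⟨hu1, hu4⟩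
      rw [e14] at hm
      exact (Submodule.mem_bot ℂ).mp hm
    have hc0 : c = 0 := by
      have h1 : c • p12 = e • p01 := by rwa [sub_eq_zero] at hu0
      have hm : c • p12 ∈ l v0 ⊓ l v2 := Submodule.mem_inf.mpr
        ⟨by rw [h1]; exact Submodule.smul_mem _ _ hp01a, Submodule.smul_mem _ _ hp12b⟩
      rw [e02] at hm
      rcases smul_eq_zero.mp ((Submodule.mem_bot ℂ).mp hm) with h | h
      · exact h
      · exact absurd h hp12n
    have hd0 : d = 0 := by
      have h2 : f • p40 - d • p34 = 0 := by rw [← key]; exact hu0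
      have h3 : d • p34 = f • p40 := by
        rw [sub_eq_zero] at h2
        exact h2.symm
      have hm : d • p34 ∈ l v0 ⊓ l v3 := Submodule.mem_inf.mpr
        ⟨by rw [h3]; exact Submodule.smul_mem _ _ hp40b, Submodule.smul_mem _ _ hp34a⟩
      rw [e03] at hm
      rcases smul_eq_zero.mp ((Submodule.mem_bot ℂ).mp hm) with h | h
      · exact h
      · exact absurd h hp34n
    have : x = 0 := by rw [← hcd, hc0, hd0]; simp
    simp [this]
  have hsupr : finrank ℂ ((Λ0 ⊔ l v0 : Submodule ℂ (Fin 5 → ℂ))) = 4 := by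
    have h := Submodule.finrank_sup_add_finrank_inf_eq Λ0 (l v0)
    rw [hΛ0L0, finrank_bot, hΛ0r, hl v0] at h
    omega
  have hwex : ∃ w, w ∉ Λ0 ⊔ l v0 := by
    by_contra hc
    push_neg at hc
    have htop : Λ0 ⊔ l v0 = ⊤ := Submodule.eq_top_iff'.mpr hc
    rw [htop, finrank_top, Module.finrank_pi] at hsupr
    simp at hsupr
  obtain ⟨w, hw⟩ := hwex
  have hwΛ0 : w ∉ Λ0 := fun h => hw (le_sup_left (α := Submodule ℂ (Fin 5 → ℂ)) h)
  have hw0 : w ≠ 0 := fun h => hw (h ▸ Submodule.zero_mem _)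
  set Λ : Submodule ℂ (Fin 5 → ℂ) := Λ0 ⊔ (ℂ ∙ w) with hΛdef
  have hΛr : finrank ℂ Λ = 3 := by
    have hdisj : Λ0 ⊓ (ℂ ∙ w) = ⊥ := by
      rw [eq_bot_iff]
      intro x hx
      obtain ⟨hx1, hx2⟩ := Submodule.mem_inf.mp hx
      obtain ⟨c, rfl⟩ := Submodule.mem_span_singleton.mp hx2
      rcases eq_or_ne c 0 with rfl | hc
      · simp
      · exact absurd (by
          have := Submodule.smul_mem Λ0 c⁻¹ hx1
          rwa [smul_smul, inv_mul_cancel₀ hc, one_smul] at this) hwΛ0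
    have h := Submodule.finrank_sup_add_finrank_inf_eq Λ0 (ℂ ∙ w)
    rw [hdisj, finrank_bot, hΛ0r, finrank_span_singleton hw0] at h
    rw [← hΛdef] at h
    omega
  have hΛL0 : Λ ⊓ l v0 = ⊥ := by
    rw [eq_bot_iff]
    intro x hx
    obtain ⟨hx1, hx2⟩ := Submodule.mem_inf.mp hx
    obtain ⟨u, hu, z, hz, huz⟩ := Submodule.mem_sup.mp hx1
    obtain ⟨c, rfl⟩ := Submodule.mem_span_singleton.mp hz
    rcases eq_or_ne c 0 with rfl | hc
    · rw [zero_smul, add_zero] at huz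
      have : x ∈ Λ0 ⊓ l v0 := Submodule.mem_inf.mpr ⟨huz ▸ hu, hx2⟩
      rw [hΛ0L0] at this
      simpa using this
    · exfalso
      apply hw
      have hxu : x - u ∈ Λ0 ⊔ l v0 :=
        Submodule.sub_mem _ (Submodule.mem_sup_right hx2) (Submodule.mem_sup_left hu)
      have : c • w = x - u := by rw [← huz]; abel
      have hwmem := Submodule.smul_mem (Λ0 ⊔ l v0) c⁻¹ hxu
      rw [← this, smul_smul, inv_mul_cancel₀ hc, one_smul] at hwmem
      exact hwmem
  have hΛmeets : ∀ j, j ≠ v0 → Λ ⊓ l j ≠ ⊥ := by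
    intro j hj
    rcases hcov j with h | h | h | h | h
    · exact absurd h hj
    · rw [h]
      exact (Submodule.ne_bot_iff _).mpr
        ⟨p12, Submodule.mem_inf.mpr ⟨Submodule.mem_sup_left hp12Λ, hp12a⟩, hp12n⟩
    · rw [h]
      exact (Submodule.ne_bot_iff _).mpr
        ⟨p12, Submodule.mem_inf.mpr ⟨Submodule.mem_sup_left hp12Λ, hp12b⟩, hp12n⟩
    · rw [h]
      exact (Submodule.ne_bot_iff _).mpr
        ⟨p34, Submodule.mem_inf.mpr ⟨Submodule.mem_sup_left hp34Λ, hp34a⟩, hp34n⟩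
    · rw [h]
      exact (Submodule.ne_bot_iff _).mpr
        ⟨p34, Submodule.mem_inf.mpr ⟨Submodule.mem_sup_left hp34Λ, hp34b⟩, hp34n⟩
  exact hsp v0 Λ hΛr hΛmeets hΛL0

end GeometricLemmas

/-- Five lines in `ℙ⁴` in special position, satisfying the regularity condition (R):
the number `n(lᵢ)` of other lines meeting `lᵢ` and the maximal number `m(lᵢ)` of other
lines coplanar with `lᵢ` are independent of `i`.  If two of the lines span a 2-plane
(i.e. some two of them meet), then either all five are coplanar or all five are
concurrent. -/
theorem five_lines_condition_R
    (l : Fin 5 → Submodule ℂ (Fin 5 → ℂ))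
    (hl : ∀ i, finrank ℂ (l i) = 2)
    (hd : Function.Injective l)
    (hsp : SpecialPosition l)
    (hRn : ∃ n : ℕ, ∀ i, ({j | j ≠ i ∧ l i ⊓ l j ≠ ⊥} : Set (Fin 5)).ncard = n)
    (hRm : ∃ m : ℕ, ∀ i, IsGreatest
      {k : ℕ | ∃ s : Finset (Fin 5), i ∉ s ∧ s.card = k ∧
        finrank ℂ ((l i ⊔ s.sup l) : Submodule ℂ (Fin 5 → ℂ)) ≤ 3} m)
    (hpair : ∃ i j, i ≠ j ∧ finrank ℂ ((l i ⊔ l j) : Submodule ℂ (Fin 5 → ℂ)) = 3) :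
    (∃ Λ : Submodule ℂ (Fin 5 → ℂ), finrank ℂ Λ = 3 ∧ ∀ i, l i ≤ Λ) ∨
    (∃ P : Submodule ℂ (Fin 5 → ℂ), finrank ℂ P = 1 ∧ ∀ i, P ≤ l i) := by
  classical
  obtain ⟨n, hn⟩ := hRn
  set N : Fin 5 → Finset (Fin 5) :=
    fun i => Finset.univ.filter (fun j => j ≠ i ∧ l i ⊓ l j ≠ ⊥) with hNdef
  have hN : ∀ i j, j ∈ N i ↔ j ≠ i ∧ l i ⊓ l j ≠ ⊥ := by
    intro i j
    simp [hNdef]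
  have hsym : ∀ i j : Fin 5, l i ⊓ l j ≠ ⊥ → l j ⊓ l i ≠ ⊥ := by
    intro i j h
    rwa [inf_comm]
  have hdeg : ∀ i, (N i).card = n := by
    intro i
    rw [← hn i]
    have hset : ({j | j ≠ i ∧ l i ⊓ l j ≠ ⊥} : Set (Fin 5)) = ↑(N i) := by
      ext j
      simp [hNdef]
    rw [hset, Set.ncard_coe_finset]
  obtain ⟨i0, j0, hij0, h3⟩ := hpair
  have hmeet0 : l i0 ⊓ l j0 ≠ ⊥ := rank3_meets (hl i0) (hl j0) h3
  have hn1 : 1 ≤ n := by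
    rw [← hdeg i0]
    exact Finset.card_pos.mpr ⟨j0, (hN i0 j0).mpr ⟨hij0.symm, hmeet0⟩⟩
  have hn4 : n ≤ 4 := by
    rw [← hdeg 0]
    have hsub : N 0 ⊆ Finset.univ.erase 0 := fun j hj =>
      Finset.mem_erase.mpr ⟨((hN 0 j).mp hj).1, Finset.mem_univ j⟩
    calc (N 0).card ≤ (Finset.univ.erase (0 : Fin 5)).card := Finset.card_le_card hsub
      _ = 4 := by rw [Finset.card_erase_of_mem (Finset.mem_univ _)]; simp
  interval_cases n
  · exact (one_regular_false _ hsym N hN hdeg).elim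
  · -- n = 2 : the cycle case, contradiction via special position
    obtain ⟨v0, v1, v2, v3, v4, hcov, a01, a12, a23, a34, a40,
      e02, e13, e24, e30, e41⟩ := two_regular_cycle _ hsym N hN hdeg
    exact (cycle_contra l hl hsp v0 v1 v2 v3 v4 hcov a01 a12 a34 a40
      (not_not.mp e02) (not_not.mp e13)
      (by rw [inf_comm]; exact not_not.mp e30)
      (by rw [inf_comm]; exact not_not.mp e41)).elim
  · exact (three_regular_false _ hsym N hN hdeg).elim
  · -- n = 4 : all lines pairwise meet
    have hall : ∀ i j : Fin 5, i ≠ j → l i ⊓ l j ≠ ⊥ := by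
      intro i j hij
      have hsub : N i ⊆ Finset.univ.erase i := fun k hk =>
        Finset.mem_erase.mpr ⟨((hN i k).mp hk).1, Finset.mem_univ k⟩
      have hNe : N i = Finset.univ.erase i := Finset.eq_of_subset_of_card_le hsub (by
        rw [hdeg i, Finset.card_erase_of_mem (Finset.mem_univ _)]
        simp)
      have hjmem : j ∈ N i := hNe ▸ Finset.mem_erase.mpr ⟨hij.symm, Finset.mem_univ j⟩
      exact ((hN i j).mp hjmem).2
    exact pairwise_meet l hl hd hall
end

section
/- If four distinct concurrent lines together with a fifth line in P^4 are in special position with respect to 2-planes, then the fifth line passes through the common point of the first four. -/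
open Module

/-- If four distinct concurrent lines together with a fifth line in `ℙ⁴` are in special
position with respect to 2-planes, then the fifth line passes through the common point of
the first four. -/
theorem fifth_line_through_common_point
    (l : Fin 5 → Submodule ℂ (Fin 5 → ℂ))
    (hl : ∀ i, finrank ℂ (l i) = 2)
    (hd : ∀ i j : Fin 4, i ≠ j → l i.castSucc ≠ l j.castSucc)
    (P : Submodule ℂ (Fin 5 → ℂ))
    (hP : finrank ℂ P = 1)
    (hconc : ∀ i : Fin 4, P ≤ l i.castSucc)
    (hsp : SpecialPosition l) :
    P ≤ l 4 := by
  by_contra hP4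
  have hPbot : P ≠ ⊥ := by
    intro h; rw [h] at hP; simp at hP
  -- P ∩ l4 = ⊥
  have hdisj : P ⊓ l 4 = ⊥ := by
    rcases lt_or_eq_of_le (inf_le_left : P ⊓ l 4 ≤ P) with h | h
    · have hlt := Submodule.finrank_lt_finrank_of_lt h
      rw [hP] at hlt
      exact Submodule.finrank_eq_zero.mp (by omega)
    · exact absurd (h ▸ inf_le_right) hP4
  have hsup3 : finrank ℂ ↥(P ⊔ l 4) = 3 := by
    have h := Submodule.finrank_sup_add_finrank_inf_eq P (l 4)
    rw [hdisj, hP, hl 4] at h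
    simpa using h
  obtain ⟨Q, hQ⟩ := Submodule.exists_isCompl (P ⊔ l 4)
  have htot : finrank ℂ (Fin 5 → ℂ) = 5 := by simp
  have hQd : finrank ℂ Q = 2 := by
    have h := Submodule.finrank_add_eq_of_isCompl hQ
    rw [hsup3, htot] at h; omega
  have hWsup : (P ⊔ Q) ⊔ l 4 = ⊤ := by
    rw [sup_right_comm]; exact hQ.sup_eq_top
  have hWle : finrank ℂ ↥(P ⊔ Q) ≤ 3 := by
    have h := Submodule.finrank_sup_add_finrank_inf_eq P Q
    rw [hP, hQd] at h; omega
  have hkey := Submodule.finrank_sup_add_finrank_inf_eq (P ⊔ Q) (l 4)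
  rw [hWsup, hl 4] at hkey
  have htopd : finrank ℂ (⊤ : Submodule ℂ (Fin 5 → ℂ)) = 5 := by
    rw [finrank_top]; simp
  rw [htopd] at hkey
  have hWd : finrank ℂ ↥(P ⊔ Q) = 3 := by omega
  have hWl4 : (P ⊔ Q) ⊓ l 4 = ⊥ := Submodule.finrank_eq_zero.mp (by omega)
  have hPW : P ≤ P ⊔ Q := le_sup_left
  refine absurd (hsp 4 (P ⊔ Q) hWd ?_) (by rw [hWl4]; exact fun h => h rfl)
  intro j hj
  have hPj : P ≤ l j := by
    fin_cases j
    · exact hconc 0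
    · exact hconc 1
    · exact hconc 2
    · exact hconc 3
    · exact absurd rfl hj
  intro hbot
  exact hPbot (le_bot_iff.mp (hbot ▸ le_inf hPW hPj))
end

section
/- Five pairwise disjoint lines in a 3-plane H ⊂ P^4, three of which (say l_1, l_2, l_3) span H and lie in one ruling R_1 of a smooth quadric surface Q ⊂ H, are in special position with respect to 2-planes of P^4 only if either all five lines belong to the ruling R_1, or l_4 and l_5 are not contained in Q and the five lines possess exactly one or exactly two common secant lines. -/
/-!
Choose bases `a, b` of `l 0` and `c, d` of `l 1` with `B a c = B b d = 1` and `B a d = B b c = 0`,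
as the nondegeneracy of `B` on `H = l 0 ⊕ l 1` allows. The lines of the ruling of `Q` opposite to
`l 0, l 1, l 2` are then `⟨s a + t b, s d - t c⟩` for `(s : t) ∈ ℙ¹`, and they are exactly the
common secants of `l 0, l 1, l 2`. Since all five lines lie in `H`, special position descends to
lines of `H`: a ruling line meeting four of the `l i` meets the fifth, so it meets `l 3` iff it
meets `l 4`. A line skew to `l 1` lies on `Q` iff it meets every ruling line; otherwise it meets `Q`
in one or two points, each on exactly one ruling line. Hence `l 3 ⊆ Q` iff `l 4 ⊆ Q`, and
otherwise the common secants are the one or two ruling lines through the points of `l 3 ∩ Q`.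
-/

open Module

open Submodule

variable {K V : Type*} [Field K] [AddCommGroup V] [Module K V]

theorem exists_eq_mul_of_mul_add_mul_eq_zero {s t p q : K} (hst : (s, t) ≠ 0)
    (h : s * p + t * q = 0) : ∃ ρ : K, p = -(ρ * t) ∧ q = ρ * s := by
  by_cases hs : s = 0
  · have ht : t ≠ 0 := fun ht => hst (by simp [hs, ht])
    have hq : q = 0 := by simpa [hs, ht] using h
    exact ⟨-p / t, by field_simp, by simp [hs, hq]⟩
  · refine ⟨q / s, ?_, by field_simp⟩
    field_simp
    linear_combination h

theorem exists_mem_eq_of_disjoint_ker {U : Type*} [AddCommGroup U] [Module K U]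
    [FiniteDimensional K U] {W : Submodule K V} {φ : V →ₗ[K] U}
    (hW : Disjoint W (LinearMap.ker φ)) (hrank : finrank K W = finrank K U) (u : U) :
    ∃ z ∈ W, φ z = u := by
  have hinj : Function.Injective (φ ∘ₗ W.subtype) := by
    rw [← LinearMap.ker_eq_bot, eq_bot_iff]
    rintro ⟨w, hw⟩ hker
    simpa using disjoint_def.1 hW w hw hker
  have hrange : LinearMap.range (φ ∘ₗ W.subtype) = ⊤ :=
    eq_top_of_finrank_eq ((LinearMap.finrank_range_of_inj hinj).trans hrank)
  obtain ⟨⟨z, hz⟩, rfl⟩ := LinearMap.range_eq_top.1 hrange u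
  exact ⟨z, hz, rfl⟩

theorem span_pair_eq_of_linearIndependent {L : Submodule K V} (hL : finrank K L = 2) {u v : V}
    (hu : u ∈ L) (hv : v ∈ L) (huv : LinearIndependent K ![u, v]) : span K {u, v} = L := by
  have : FiniteDimensional K L := FiniteDimensional.of_finrank_pos (by omega)
  refine eq_of_le_of_finrank_eq (span_le.2 (Set.pair_subset hu hv)) ?_
  rw [hL, ← Matrix.range_cons_cons_empty, finrank_span_eq_card huv, Fintype.card_fin]

theorem exists_linearIndependent_of_finrank_eq_two {L : Submodule K V} (hL : finrank K L = 2) :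
    ∃ e f : V, LinearIndependent K ![e, f] ∧ span K {e, f} = L := by
  have : FiniteDimensional K L := FiniteDimensional.of_finrank_pos (by omega)
  let b := Module.finBasisOfFinrankEq K L hL
  have hli : LinearIndependent K ![(b 0 : V), b 1] := by
    refine LinearIndependent.pair_iff.2 fun s t hst => ?_
    have h := Fintype.linearIndependent_iff.1 b.linearIndependent ![s, t]
      (Subtype.ext (by simpa [Fin.sum_univ_two] using hst))
    exact ⟨h 0, h 1⟩
  exact ⟨b 0, b 1, hli, span_pair_eq_of_linearIndependent hL (b 0).2 (b 1).2 hli⟩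

theorem linearIndependent_pair_of_disjoint {P Q : Submodule K V} (hPQ : Disjoint P Q) {u v : V}
    (hu : u ∈ P) (hv : v ∈ Q) (hu0 : u ≠ 0) (hv0 : v ≠ 0) : LinearIndependent K ![u, v] := by
  refine LinearIndependent.pair_iff.2 fun s t hst => ?_
  have hsu : s • u = 0 := disjoint_def.1 hPQ _ (P.smul_mem s hu)
    (by rw [eq_neg_of_add_eq_zero_left hst]; exact Q.neg_mem (Q.smul_mem t hv))
  have htv : t • v = 0 := by rw [hsu, zero_add] at hst; exact hst
  exact ⟨(smul_eq_zero.1 hsu).resolve_right hu0, (smul_eq_zero.1 htv).resolve_right hv0⟩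

def IsTotallyIsotropic (B : V →ₗ[K] V →ₗ[K] K) (W : Submodule K V) : Prop :=
  ∀ x ∈ W, ∀ y ∈ W, B x y = 0

theorem isTotallyIsotropic_iff [NeZero (2 : K)] {B : V →ₗ[K] V →ₗ[K] K}
    (hB : ∀ x y, B x y = B y x) {W : Submodule K V} :
    IsTotallyIsotropic B W ↔ ∀ x ∈ W, B x x = 0 := by
  refine ⟨fun h x hx => h x hx x hx, fun h x hx y hy => ?_⟩
  have hxy := h (x + y) (W.add_mem hx hy)
  simp only [map_add, LinearMap.add_apply, h x hx, h y hy, hB y x] at hxy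
  exact (mul_eq_zero.1 (by linear_combination hxy : (2 : K) * B x y = 0)).resolve_left two_ne_zero

theorem isTotallyIsotropic_of_inf_ne_bot [NeZero (2 : K)] {B : V →ₗ[K] V →ₗ[K] K}
    (hB : ∀ x y, B x y = B y x) {P Q R L : Submodule K V} (hP : IsTotallyIsotropic B P)
    (hQ : IsTotallyIsotropic B Q) (hR : IsTotallyIsotropic B R) (hPQ : Disjoint P Q)
    (hPR : Disjoint P R) (hQR : Disjoint Q R) (hL : finrank K L = 2) (hLP : L ⊓ P ≠ ⊥)
    (hLQ : L ⊓ Q ≠ ⊥) (hLR : L ⊓ R ≠ ⊥) : IsTotallyIsotropic B L := by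
  obtain ⟨u, ⟨huL, huP⟩, hu0⟩ := (L ⊓ P).ne_bot_iff.1 hLP
  obtain ⟨v, ⟨hvL, hvQ⟩, hv0⟩ := (L ⊓ Q).ne_bot_iff.1 hLQ
  obtain ⟨z, ⟨hzL, hzR⟩, hz0⟩ := (L ⊓ R).ne_bot_iff.1 hLR
  have hLuv := span_pair_eq_of_linearIndependent hL huL hvL
    (linearIndependent_pair_of_disjoint hPQ huP hvQ hu0 hv0)
  obtain ⟨x, y, rfl⟩ := mem_span_pair.1 (hLuv ▸ hzL)
  have hx : x ≠ 0 := by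
    rintro rfl
    exact hz0 (disjoint_def.1 hQR _ (by simpa using Q.smul_mem y hvQ) hzR)
  have hy : y ≠ 0 := by
    rintro rfl
    exact hz0 (disjoint_def.1 hPR _ (by simpa using P.smul_mem x huP) hzR)
  have huv : B u v = 0 := by
    have hzz := hR _ hzR _ hzR
    simp only [map_add, map_smul, LinearMap.add_apply, LinearMap.smul_apply, smul_eq_mul,
      hP u huP u huP, hQ v hvQ v hvQ, hB v u] at hzz
    have : (2 * x * y) * B u v = 0 := by linear_combination hzz
    simpa [hx, hy, two_ne_zero] using this
  rw [← hLuv]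
  intro w hw w' hw'
  obtain ⟨α, β, rfl⟩ := mem_span_pair.1 hw
  obtain ⟨α', β', rfl⟩ := mem_span_pair.1 hw'
  simp [hP u huP u huP, hQ v hvQ v hvQ, huv, hB v u]

theorem exists_eq_mul_of_binary_quadratic [IsAlgClosed K] [NeZero (2 : K)] {α β γ : K}
    (h : (α, β, γ) ≠ 0) : ∃ ℓ₁ ℓ₂ : K × K, ℓ₁ ≠ 0 ∧ ℓ₂ ≠ 0 ∧ ∀ x y : K,
      α * x ^ 2 + β * (x * y) + γ * y ^ 2 = (ℓ₁.1 * x + ℓ₁.2 * y) * (ℓ₂.1 * x + ℓ₂.2 * y) := by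
  by_cases hα : α = 0
  · refine ⟨(0, 1), (β, γ), by simp, fun h' => h (by simp_all), fun x y => ?_⟩
    simp only [hα]
    ring
  · obtain ⟨s, hs⟩ := IsAlgClosed.exists_pow_nat_eq (β ^ 2 - 4 * α * γ) two_pos
    refine ⟨(α, (β - s) / 2), (1, (β + s) / (2 * α)), by simp [hα], by simp, fun x y => ?_⟩
    field_simp
    linear_combination y ^ 2 * hs

theorem exists_isotropic_of_finrank_eq_two [IsAlgClosed K] [NeZero (2 : K)]
    {B : V →ₗ[K] V →ₗ[K] K} {W : Submodule K V} (hW : finrank K W = 2)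
    (hQ : ∃ x ∈ W, B x x ≠ 0) :
    ∃ w₁ ∈ W, ∃ w₂ ∈ W, w₁ ≠ 0 ∧ w₂ ≠ 0 ∧ B w₁ w₁ = 0 ∧ B w₂ w₂ = 0 ∧
      ∀ w ∈ W, B w w = 0 → w ∈ K ∙ w₁ ∨ w ∈ K ∙ w₂ := by
  obtain ⟨e, f, hef, rfl⟩ := exists_linearIndependent_of_finrank_eq_two hW
  have hq : ∀ x y : K, B (x • e + y • f) (x • e + y • f) =
      B e e * x ^ 2 + (B e f + B f e) * (x * y) + B f f * y ^ 2 := by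
    intro x y
    simp only [map_add, map_smul, LinearMap.add_apply, LinearMap.smul_apply, smul_eq_mul]
    ring
  obtain ⟨ℓ₁, ℓ₂, hℓ₁, hℓ₂, hfac⟩ :
      ∃ ℓ₁ ℓ₂ : K × K, ℓ₁ ≠ 0 ∧ ℓ₂ ≠ 0 ∧ ∀ x y : K, B (x • e + y • f) (x • e + y • f) =
        (ℓ₁.1 * x + ℓ₁.2 * y) * (ℓ₂.1 * x + ℓ₂.2 * y) := by
    simp only [hq]
    refine exists_eq_mul_of_binary_quadratic fun h0 => ?_
    obtain ⟨_, hx, hx0⟩ := hQ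
    obtain ⟨x, y, rfl⟩ := mem_span_pair.1 hx
    simp_all
  -- the isotropic vectors are the zeros of the two linear factors
  have hzero : ∀ ℓ : K × K, ℓ ≠ 0 → ∀ x y : K, ℓ.1 * x + ℓ.2 * y = 0 →
      x • e + y • f ∈ K ∙ ((-ℓ.2) • e + ℓ.1 • f) := by
    intro ℓ hℓ x y hxy
    obtain ⟨ρ, rfl, rfl⟩ := exists_eq_mul_of_mul_add_mul_eq_zero hℓ hxy
    exact mem_span_singleton.2 ⟨ρ, by module⟩
  have hne : ∀ ℓ : K × K, ℓ ≠ 0 → (-ℓ.2) • e + ℓ.1 • f ≠ 0 := fun ℓ hℓ h =>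
    hℓ (by simpa [Prod.ext_iff, and_comm] using LinearIndependent.pair_iff.1 hef _ _ h)
  have hmem : ∀ x y : K, x • e + y • f ∈ span K {e, f} := fun x y =>
    mem_span_pair.2 ⟨x, y, rfl⟩
  refine ⟨_, hmem _ _, _, hmem _ _, hne ℓ₁ hℓ₁, hne ℓ₂ hℓ₂, by rw [hfac]; ring,
    by rw [hfac]; ring, fun w hw hww => ?_⟩
  obtain ⟨x, y, rfl⟩ := mem_span_pair.1 hw
  rcases mul_eq_zero.1 ((hfac x y).symm.trans hww) with h | h
  · exact Or.inl (hzero ℓ₁ hℓ₁ x y h)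
  · exact Or.inr (hzero ℓ₂ hℓ₂ x y h)

section HyperbolicFrame

structure IsHyperbolicFrame (B : V →ₗ[K] V →ₗ[K] K) (a b c d : V) : Prop where
  aa : B a a = 0
  ab : B a b = 0
  ba : B b a = 0
  bb : B b b = 0
  cc : B c c = 0
  cd : B c d = 0
  dc : B d c = 0
  dd : B d d = 0
  ac : B a c = 1
  ca : B c a = 1
  bd : B b d = 1
  db : B d b = 1
  ad : B a d = 0
  da : B d a = 0
  bc : B b c = 0
  cb : B c b = 0

/-- For `p ≠ 0`, the line through `p.1 • a + p.2 • b ∈ span {a, b}` of the ruling opposite to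
`span {a, b}` and `span {c, d}`. -/
def rulingLine (a b c d : V) (p : K × K) : Submodule K V :=
  span K {p.1 • a + p.2 • b, p.1 • d - p.2 • c}

variable {B : V →ₗ[K] V →ₗ[K] K} {a b c d : V}

theorem rulingLine_le_span (p : K × K) : rulingLine a b c d p ≤ span K {a, b, c, d} := by
  have hmem : ∀ x ∈ ({a, b, c, d} : Set V), x ∈ span K {a, b, c, d} := fun x hx => subset_span hx
  refine span_le.2 (Set.pair_subset ?_ ?_)
  · exact add_mem (smul_mem _ _ (hmem a (by simp))) (smul_mem _ _ (hmem b (by simp)))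
  · exact sub_mem (smul_mem _ _ (hmem d (by simp))) (smul_mem _ _ (hmem c (by simp)))

theorem rulingLine_smul {μ : K} (hμ : μ ≠ 0) (p : K × K) :
    rulingLine a b c d (μ • p) = rulingLine a b c d p := by
  have hle : ∀ (μ : K) (p : K × K), rulingLine a b c d (μ • p) ≤ rulingLine a b c d p := by
    intro μ p
    refine span_le.2 (Set.pair_subset ?_ ?_)
    · exact mem_span_pair.2 ⟨μ, 0, by simp only [Prod.smul_fst, Prod.smul_snd]; module⟩
    · exact mem_span_pair.2 ⟨0, μ, by simp only [Prod.smul_fst, Prod.smul_snd]; module⟩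
  refine le_antisymm (hle μ p) ?_
  simpa [smul_smul, inv_mul_cancel₀ hμ] using hle μ⁻¹ (μ • p)

namespace IsHyperbolicFrame

theorem eq_sum (hF : IsHyperbolicFrame B a b c d) {z : V} (hz : z ∈ span K {a, b, c, d}) :
    z = B z c • a + B z d • b + B z a • c + B z b • d := by
  induction hz using span_induction with
  | mem x hx =>
    rcases hx with rfl | rfl | rfl | rfl <;>
      simp [hF.aa, hF.ab, hF.ba, hF.bb, hF.cc, hF.cd, hF.dc, hF.dd, hF.ac, hF.ca, hF.bd, hF.db,
        hF.ad, hF.da, hF.bc, hF.cb]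
  | zero => simp
  | add x y _ _ hx hy =>
    simp only [map_add, LinearMap.add_apply]
    linear_combination (norm := module) hx + hy
  | smul r x _ hx =>
    simp only [map_smul, LinearMap.smul_apply, smul_eq_mul]
    linear_combination (norm := module) r • hx

theorem disjoint_span (hF : IsHyperbolicFrame B a b c d) :
    Disjoint (span K {a, b}) (span K {c, d}) := by
  refine disjoint_def.2 fun x hx hx' => ?_
  obtain ⟨s, t, rfl⟩ := mem_span_pair.1 hx
  obtain ⟨p, q, h⟩ := mem_span_pair.1 hx'
  have hs : s = 0 := by simpa [hF.ac, hF.bc, hF.cc, hF.dc] using congrArg (B · c) h.symm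
  have ht : t = 0 := by simpa [hF.ad, hF.bd, hF.cd, hF.dd] using congrArg (B · d) h.symm
  simp [hs, ht]

theorem exists_smul_eq_of_mem_rulingLine (hF : IsHyperbolicFrame B a b c d) {p : K × K} {w : V}
    (hw : w ∈ rulingLine a b c d p) : ∃ α : K, (B w c, B w d) = α • p := by
  obtain ⟨α, β, rfl⟩ := mem_span_pair.1 hw
  exact ⟨α, by simp [hF.ac, hF.bc, hF.cc, hF.dc, hF.ad, hF.bd, hF.cd, hF.dd, Prod.smul_def]⟩

theorem isTotallyIsotropic_rulingLine (hF : IsHyperbolicFrame B a b c d) (p : K × K) :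
    IsTotallyIsotropic B (rulingLine a b c d p) := by
  intro x hx y hy
  obtain ⟨α, β, rfl⟩ := mem_span_pair.1 hx
  obtain ⟨α', β', rfl⟩ := mem_span_pair.1 hy
  simp only [map_add, map_sub, map_smul, LinearMap.add_apply, LinearMap.sub_apply,
    LinearMap.smul_apply, smul_eq_mul, hF.aa, hF.ab, hF.ba, hF.bb, hF.cc, hF.cd, hF.dc, hF.dd,
    hF.ac, hF.ca, hF.bd, hF.db, hF.ad, hF.da, hF.bc, hF.cb]
  ring

theorem smul_add_smul_ne_zero (hF : IsHyperbolicFrame B a b c d) {p : K × K} (hp : p ≠ 0) :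
    p.1 • a + p.2 • b ≠ 0 := fun h => hp <| by
  simpa [hF.ac, hF.bc, hF.ad, hF.bd, Prod.ext_iff] using
    And.intro (congrArg (B · c) h) (congrArg (B · d) h)

theorem smul_sub_smul_ne_zero (hF : IsHyperbolicFrame B a b c d) {p : K × K} (hp : p ≠ 0) :
    p.1 • d - p.2 • c ≠ 0 := fun h => hp <| by
  simpa [hF.ca, hF.da, hF.cb, hF.db, Prod.ext_iff, and_comm] using
    And.intro (congrArg (B · a) h) (congrArg (B · b) h)

theorem finrank_rulingLine (hF : IsHyperbolicFrame B a b c d) {p : K × K} (hp : p ≠ 0) :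
    finrank K (rulingLine a b c d p) = 2 := by
  have := linearIndependent_pair_of_disjoint hF.disjoint_span (mem_span_pair.2 ⟨p.1, p.2, rfl⟩)
    (mem_span_pair.2 ⟨-p.2, p.1, by module⟩) (hF.smul_add_smul_ne_zero hp)
    (hF.smul_sub_smul_ne_zero hp)
  rw [rulingLine, ← Matrix.range_cons_cons_empty, finrank_span_eq_card this, Fintype.card_fin]

theorem mem_rulingLine_of_isotropic [NeZero (2 : K)] (hF : IsHyperbolicFrame B a b c d) {w : V}
    (hw : w ∈ span K {a, b, c, d}) (hww : B w w = 0) (hwcd : (B w c, B w d) ≠ 0) :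
    w ∈ rulingLine a b c d (B w c, B w d) := by
  have hsum := hF.eq_sum hw
  rw [hsum] at hww
  simp only [map_add, map_smul, LinearMap.add_apply, LinearMap.smul_apply, smul_eq_mul, hF.aa,
    hF.ab, hF.ba, hF.bb, hF.cc, hF.cd, hF.dc, hF.dd, hF.ac, hF.ca, hF.bd, hF.db, hF.ad, hF.da,
    hF.bc, hF.cb] at hww
  have h2 : (2 : K) * (B w c * B w a + B w d * B w b) = 0 := by linear_combination hww
  obtain ⟨ρ, hρa, hρb⟩ :=
    exists_eq_mul_of_mul_add_mul_eq_zero hwcd ((mul_eq_zero.1 h2).resolve_left two_ne_zero)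
  rw [hρa, hρb] at hsum
  exact mem_span_pair.2 ⟨1, ρ, by linear_combination (norm := module) -hsum⟩

theorem rulingLine_eq_of_mem (hF : IsHyperbolicFrame B a b c d) {p : K × K} {w : V}
    (hw : w ∈ rulingLine a b c d p) (hwcd : (B w c, B w d) ≠ 0) :
    rulingLine a b c d (B w c, B w d) = rulingLine a b c d p := by
  obtain ⟨α, hα⟩ := hF.exists_smul_eq_of_mem_rulingLine hw
  rw [hα] at hwcd ⊢
  exact rulingLine_smul (left_ne_zero_of_smul hwcd) p

theorem exists_smul_eq_of_rulingLine_eq (hF : IsHyperbolicFrame B a b c d) {p q : K × K}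
    (h : rulingLine a b c d p = rulingLine a b c d q) : ∃ α : K, q = α • p := by
  have hq : q.1 • a + q.2 • b ∈ rulingLine a b c d p := h ▸ subset_span (by simp)
  simpa [hF.ac, hF.bc, hF.ad, hF.bd] using hF.exists_smul_eq_of_mem_rulingLine hq

theorem apply_ne_zero_of_disjoint (hF : IsHyperbolicFrame B a b c d) {W : Submodule K V}
    (hW : W ≤ span K {a, b, c, d}) (hWcd : Disjoint W (span K {c, d})) {w : V} (hw : w ∈ W)
    (hw0 : w ≠ 0) : (B w c, B w d) ≠ 0 := by
  intro h
  have hsum := hF.eq_sum (hW hw)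
  simp only [Prod.mk_eq_zero] at h
  rw [h.1, h.2, zero_smul, zero_smul, zero_add, zero_add] at hsum
  exact hw0 (disjoint_def.1 hWcd w hw (hsum ▸ mem_span_pair.2 ⟨_, _, rfl⟩))

theorem rulingLine_inf_span_ne_bot (hF : IsHyperbolicFrame B a b c d) {p : K × K} (hp : p ≠ 0) :
    rulingLine a b c d p ⊓ span K {c, d} ≠ ⊥ :=
  (Submodule.ne_bot_iff _).2 ⟨_, ⟨subset_span (by simp), mem_span_pair.2 ⟨-p.2, p.1, by module⟩⟩,
    hF.smul_sub_smul_ne_zero hp⟩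

theorem rulingLine_inf_ne_bot [NeZero (2 : K)] (hF : IsHyperbolicFrame B a b c d)
    {L : Submodule K V} (hL : L ≤ span K {a, b, c, d}) (hL2 : finrank K L = 2)
    (hLcd : Disjoint L (span K {c, d})) (hLiso : IsTotallyIsotropic B L) {p : K × K}
    (hp : p ≠ 0) : rulingLine a b c d p ⊓ L ≠ ⊥ := by
  have hker : Disjoint L (LinearMap.ker ((B.flip c).prod (B.flip d))) :=
    disjoint_def.2 fun w hw hwφ => by_contra fun hw0 =>
      hF.apply_ne_zero_of_disjoint hL hLcd hw hw0 hwφ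
  obtain ⟨z, hz, hzp⟩ := exists_mem_eq_of_disjoint_ker hker (by simp [hL2]) p
  replace hzp : (B z c, B z d) = p := hzp
  refine (Submodule.ne_bot_iff _).2 ⟨z, ⟨hzp ▸ ?_, hz⟩, fun hz0 => hp (by simp [← hzp, hz0])⟩
  exact hF.mem_rulingLine_of_isotropic (hL hz) (hLiso z hz z hz) (hzp ▸ hp)

theorem exists_eq_rulingLine (hF : IsHyperbolicFrame B a b c d) {L : Submodule K V}
    (hL2 : finrank K L = 2) (hLiso : IsTotallyIsotropic B L) (hLab : L ⊓ span K {a, b} ≠ ⊥)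
    (hLcd : L ⊓ span K {c, d} ≠ ⊥) : ∃ p : K × K, p ≠ 0 ∧ L = rulingLine a b c d p := by
  obtain ⟨u, ⟨huL, hu⟩, hu0⟩ := (Submodule.ne_bot_iff _).1 hLab
  obtain ⟨v, ⟨hvL, hv⟩, hv0⟩ := (Submodule.ne_bot_iff _).1 hLcd
  have hLuv := span_pair_eq_of_linearIndependent hL2 huL hvL
    (linearIndependent_pair_of_disjoint hF.disjoint_span hu hv hu0 hv0)
  obtain ⟨s, t, rfl⟩ := mem_span_pair.1 hu
  obtain ⟨p, q, rfl⟩ := mem_span_pair.1 hv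
  have hst : (s, t) ≠ 0 := fun h => hu0 (by simp_all)
  have hBuv : s * p + t * q = 0 := by
    simpa [hF.ac, hF.bc, hF.ad, hF.bd] using hLiso _ huL _ hvL
  obtain ⟨ρ, rfl, rfl⟩ := exists_eq_mul_of_mul_add_mul_eq_zero hst hBuv
  have : FiniteDimensional K (rulingLine a b c d (s, t)) :=
    FiniteDimensional.of_finrank_pos (by rw [hF.finrank_rulingLine hst]; norm_num)
  refine ⟨(s, t), hst, eq_of_le_of_finrank_eq ?_ (by rw [hL2, hF.finrank_rulingLine hst])⟩
  rw [← hLuv]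
  refine span_le.2 (Set.pair_subset (subset_span (by simp)) ?_)
  exact mem_span_pair.2 ⟨0, ρ, by module⟩

theorem isTotallyIsotropic_span_ab (hF : IsHyperbolicFrame B a b c d) :
    IsTotallyIsotropic B (span K {a, b}) := by
  intro x hx y hy
  obtain ⟨s, t, rfl⟩ := mem_span_pair.1 hx
  obtain ⟨s', t', rfl⟩ := mem_span_pair.1 hy
  simp [hF.aa, hF.ab, hF.ba, hF.bb]

theorem isTotallyIsotropic_span_cd (hF : IsHyperbolicFrame B a b c d) :
    IsTotallyIsotropic B (span K {c, d}) := by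
  intro x hx y hy
  obtain ⟨s, t, rfl⟩ := mem_span_pair.1 hx
  obtain ⟨s', t', rfl⟩ := mem_span_pair.1 hy
  simp [hF.cc, hF.cd, hF.dc, hF.dd]

theorem exists_eq_rulingLine_iff [NeZero (2 : K)] (hB : ∀ x y, B x y = B y x)
    (hF : IsHyperbolicFrame B a b c d) {R : Submodule K V} (hR : R ≤ span K {a, b, c, d})
    (hR2 : finrank K R = 2) (hRiso : IsTotallyIsotropic B R) (hRab : Disjoint (span K {a, b}) R)
    (hRcd : Disjoint R (span K {c, d})) {L : Submodule K V} :
    (finrank K L = 2 ∧ L ⊓ span K {a, b} ≠ ⊥ ∧ L ⊓ span K {c, d} ≠ ⊥ ∧ L ⊓ R ≠ ⊥) ↔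
      ∃ p : K × K, p ≠ 0 ∧ L = rulingLine a b c d p := by
  constructor
  · rintro ⟨hL2, hLab, hLcd, hLR⟩
    refine hF.exists_eq_rulingLine hL2 ?_ hLab hLcd
    exact isTotallyIsotropic_of_inf_ne_bot hB hF.isTotallyIsotropic_span_ab
      hF.isTotallyIsotropic_span_cd hRiso hF.disjoint_span hRab hRcd.symm hL2 hLab hLcd hLR
  · rintro ⟨p, hp, rfl⟩
    refine ⟨hF.finrank_rulingLine hp, (Submodule.ne_bot_iff _).2 ⟨_, ⟨subset_span (by simp),
      mem_span_pair.2 ⟨p.1, p.2, rfl⟩⟩, hF.smul_add_smul_ne_zero hp⟩,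
      hF.rulingLine_inf_span_ne_bot hp, hF.rulingLine_inf_ne_bot hR hR2 hRcd hRiso hp⟩

theorem exists_rulingLines_inf_ne_bot_eq_pair [IsAlgClosed K] [NeZero (2 : K)]
    (hF : IsHyperbolicFrame B a b c d) {W : Submodule K V} (hW : W ≤ span K {a, b, c, d})
    (hW2 : finrank K W = 2) (hWcd : Disjoint W (span K {c, d})) (hQ : ∃ x ∈ W, B x x ≠ 0) :
    ∃ L₁ L₂ : Submodule K V,
      {L | ∃ p : K × K, p ≠ 0 ∧ L = rulingLine a b c d p ∧ L ⊓ W ≠ ⊥} = {L₁, L₂} := by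
  obtain ⟨w₁, hw₁, w₂, hw₂, hw₁0, hw₂0, hw₁w₁, hw₂w₂, hiso⟩ :=
    exists_isotropic_of_finrank_eq_two hW2 hQ
  have hcoord := fun {w} => hF.apply_ne_zero_of_disjoint hW hWcd (w := w)
  have hmeet : ∀ w ∈ W, w ≠ 0 → B w w = 0 → rulingLine a b c d (B w c, B w d) ⊓ W ≠ ⊥ :=
    fun w hw hw0 hww => (Submodule.ne_bot_iff _).2
      ⟨w, ⟨hF.mem_rulingLine_of_isotropic (hW hw) hww (hcoord hw hw0), hw⟩, hw0⟩
  refine ⟨rulingLine a b c d (B w₁ c, B w₁ d), rulingLine a b c d (B w₂ c, B w₂ d), ?_⟩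
  ext L
  simp only [Set.mem_ofPred_eq, Set.mem_insert_iff, Set.mem_singleton_iff]
  constructor
  · rintro ⟨p, -, rfl, hp⟩
    obtain ⟨w, ⟨hwp, hwW⟩, hw0⟩ := (Submodule.ne_bot_iff _).1 hp
    have hsame : ∀ w' : V, w ∈ K ∙ w' →
        rulingLine a b c d p = rulingLine a b c d (B w' c, B w' d) := by
      intro w' hww'
      obtain ⟨μ, rfl⟩ := mem_span_singleton.1 hww'
      have hμ : μ ≠ 0 := by rintro rfl; simp at hw0
      have hsmul : (B (μ • w') c, B (μ • w') d) = μ • (B w' c, B w' d) := by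
        simp [Prod.smul_def]
      rw [← hF.rulingLine_eq_of_mem hwp (hcoord hwW hw0), hsmul, rulingLine_smul hμ]
    rcases hiso w hwW (hF.isTotallyIsotropic_rulingLine p w hwp w hwp) with h | h
    · exact Or.inl (hsame w₁ h)
    · exact Or.inr (hsame w₂ h)
  · rintro (rfl | rfl)
    · exact ⟨_, hcoord hw₁ hw₁0, rfl, hmeet w₁ hw₁ hw₁0 hw₁w₁⟩
    · exact ⟨_, hcoord hw₂ hw₂0, rfl, hmeet w₂ hw₂ hw₂0 hw₂w₂⟩

theorem forall_rulingLine_inf_ne_bot_iff [IsAlgClosed K] [NeZero (2 : K)]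
    (hB : ∀ x y, B x y = B y x) (hF : IsHyperbolicFrame B a b c d) {W : Submodule K V}
    (hW : W ≤ span K {a, b, c, d}) (hW2 : finrank K W = 2) (hWcd : Disjoint W (span K {c, d})) :
    (∀ p : K × K, p ≠ 0 → rulingLine a b c d p ⊓ W ≠ ⊥) ↔ IsTotallyIsotropic B W := by
  refine ⟨fun hall => ?_, fun hiso p hp => hF.rulingLine_inf_ne_bot hW hW2 hWcd hiso hp⟩
  by_contra hWiso
  obtain ⟨L₁, L₂, hpair⟩ := hF.exists_rulingLines_inf_ne_bot_eq_pair hW hW2 hWcd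
    (by simpa [isTotallyIsotropic_iff hB] using hWiso)
  have hmem : ∀ p : K × K, p ≠ 0 →
      rulingLine a b c d p = L₁ ∨ rulingLine a b c d p = L₂ := fun p hp => by
    have : rulingLine a b c d p ∈ ({L₁, L₂} : Set (Submodule K V)) :=
      hpair ▸ ⟨p, hp, rfl, hall p hp⟩
    simpa using this
  have hne : ∀ p q : K × K, p.1 * q.2 ≠ p.2 * q.1 →
      rulingLine a b c d p ≠ rulingLine a b c d q := by
    rintro p q hpq h
    obtain ⟨α, rfl⟩ := hF.exists_smul_eq_of_rulingLine_eq h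
    exact hpq (by simp only [Prod.smul_fst, Prod.smul_snd, smul_eq_mul]; ring)
  -- the three distinct ruling lines through `a`, `b` and `a + b` cannot all be `L₁` or `L₂`
  rcases hmem (1, 0) (by simp) with h₁ | h₁ <;> rcases hmem (0, 1) (by simp) with h₂ | h₂ <;>
  rcases hmem (1, 1) (by simp) with h₃ | h₃ <;>
  first
  | exact hne (1, 0) (0, 1) (by simp) (h₁.trans h₂.symm)
  | exact hne (1, 0) (1, 1) (by simp) (h₁.trans h₃.symm)
  | exact hne (0, 1) (1, 1) (by simp) (h₂.trans h₃.symm)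

end IsHyperbolicFrame

end HyperbolicFrame

theorem exists_isHyperbolicFrame {B : V →ₗ[K] V →ₗ[K] K} (hB : ∀ x y, B x y = B y x)
    {H P Q : Submodule K V} (hH : finrank K H = 4) (hnd : ∀ x ∈ H, (∀ y ∈ H, B x y = 0) → x = 0)
    (hP2 : finrank K P = 2) (hQ2 : finrank K Q = 2) (hPH : P ≤ H) (hQH : Q ≤ H)
    (hPQ : Disjoint P Q) (hP : IsTotallyIsotropic B P) (hQ : IsTotallyIsotropic B Q) :
    ∃ a b c d : V, IsHyperbolicFrame B a b c d ∧ span K {a, b} = P ∧ span K {c, d} = Q ∧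
      span K {a, b, c, d} = H := by
  have hPQH : P ⊔ Q = H := by
    have : FiniteDimensional K H := .of_finrank_pos (by omega)
    have : FiniteDimensional K P := .of_finrank_pos (by omega)
    have : FiniteDimensional K Q := .of_finrank_pos (by omega)
    refine eq_of_le_of_finrank_eq (sup_le hPH hQH) ?_
    have := finrank_sup_add_finrank_inf_eq P Q
    rw [hPQ.eq_bot, finrank_bot, hP2, hQ2] at this
    omega
  subst hPQH
  obtain ⟨a, b, -, rfl⟩ := exists_linearIndependent_of_finrank_eq_two hP2
  have ha : a ∈ span K {a, b} := subset_span (by simp)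
  have hb : b ∈ span K {a, b} := subset_span (by simp)
  -- nondegeneracy makes `Q` dual to `span {a, b}` under `B`
  have hker : Disjoint Q (LinearMap.ker ((B a).prod (B b))) := by
    refine disjoint_def.2 fun w hw hwab => hnd w (mem_sup_right hw) fun y hy => ?_
    obtain ⟨y₁, hy₁, y₂, hy₂, rfl⟩ := mem_sup.1 hy
    obtain ⟨s, t, rfl⟩ := mem_span_pair.1 hy₁
    simp only [LinearMap.mem_ker, LinearMap.prod_apply, Function.prod_apply,
      Prod.mk_eq_zero] at hwab
    simp [hB w a, hB w b, hwab, hQ w hw y₂ hy₂]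
  obtain ⟨c, hc, hcab⟩ := exists_mem_eq_of_disjoint_ker hker (by simp [hQ2]) (1, 0)
  obtain ⟨d, hd, hdab⟩ := exists_mem_eq_of_disjoint_ker hker (by simp [hQ2]) (0, 1)
  simp only [LinearMap.prod_apply, Function.prod_apply, Prod.mk.injEq] at hcab hdab
  have hcd : span K {c, d} = Q := by
    refine le_antisymm (span_le.2 (Set.pair_subset hc hd)) fun w hw => ?_
    have hw' : w - (B a w • c + B b w • d) = 0 := by
      refine disjoint_def.1 hker _ (sub_mem hw (add_mem (smul_mem _ _ hc) (smul_mem _ _ hd))) ?_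
      simp [hcab, hdab]
    rw [sub_eq_zero.1 hw']
    exact mem_span_pair.2 ⟨_, _, rfl⟩
  refine ⟨a, b, c, d, ⟨hP a ha a ha, hP a ha b hb, hP b hb a ha, hP b hb b hb, hQ c hc c hc,
    hQ c hc d hd, hQ d hd c hc, hQ d hd d hd, hcab.1, hB c a ▸ hcab.1, hdab.2, hB d b ▸ hdab.2,
    hdab.1, hB d a ▸ hdab.1, hcab.2, hB c b ▸ hcab.2⟩, rfl, hcd, ?_⟩
  rw [← hcd, ← span_union, Set.insert_union, Set.singleton_union]

theorem SpecialPosition.inf_ne_bot_of_le {n : ℕ} {l : Fin n → Submodule ℂ (Fin 5 → ℂ)}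
    (hsp : SpecialPosition l) {H : Submodule ℂ (Fin 5 → ℂ)} (hH : H ≠ ⊤) (hlH : ∀ i, l i ≤ H)
    {M : Submodule ℂ (Fin 5 → ℂ)} (hMH : M ≤ H) (hM : finrank ℂ M = 2) (i : Fin n)
    (hmeet : ∀ j, j ≠ i → M ⊓ l j ≠ ⊥) : M ⊓ l i ≠ ⊥ := by
  obtain ⟨v, -, hv⟩ := SetLike.exists_of_lt (lt_top_iff_ne_top.2 hH)
  -- `M ⊔ ⟨v⟩` is a 2-plane meeting `H`, and so each `l j`, exactly where `M` does
  have hinf : ∀ j, (M ⊔ ℂ ∙ v) ⊓ l j = M ⊓ l j := fun j => calc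
    (M ⊔ ℂ ∙ v) ⊓ l j = (M ⊔ ℂ ∙ v) ⊓ H ⊓ l j := by rw [inf_assoc, inf_eq_right.2 (hlH j)]
    _ = M ⊓ l j := by
      rw [sup_inf_assoc_of_le _ hMH, (disjoint_span_singleton_of_notMem hv).symm.eq_bot,
        sup_bot_eq]
  have hΛ : finrank ℂ (M ⊔ ℂ ∙ v : Submodule ℂ (Fin 5 → ℂ)) = 3 := by
    rw [finrank_sup_span_singleton fun h => hv (hMH h), hM]
  simpa [hinf] using hsp i _ hΛ fun j hj => by simpa [hinf] using hmeet j hj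

theorem SpecialPosition.inf_ne_bot_iff_of_le {n : ℕ} {l : Fin n → Submodule ℂ (Fin 5 → ℂ)}
    (hsp : SpecialPosition l) {H : Submodule ℂ (Fin 5 → ℂ)} (hH : H ≠ ⊤) (hlH : ∀ i, l i ≤ H)
    {M : Submodule ℂ (Fin 5 → ℂ)} (hMH : M ≤ H) (hM : finrank ℂ M = 2) {i i' : Fin n}
    (hmeet : ∀ j, j ≠ i → j ≠ i' → M ⊓ l j ≠ ⊥) :
    M ⊓ l i ≠ ⊥ ↔ M ⊓ l i' ≠ ⊥ := by
  refine ⟨fun h => hsp.inf_ne_bot_of_le hH hlH hMH hM i' fun j hj => ?_,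
    fun h => hsp.inf_ne_bot_of_le hH hlH hMH hM i fun j hj => ?_⟩
  · by_cases hji : j = i
    · exact hji ▸ h
    · exact hmeet j hji hj
  · by_cases hji' : j = i'
    · exact hji' ▸ h
    · exact hmeet j hj hji'

theorem five_skew_lines_with_three_on_quadric_general
    (l : Fin 5 → Submodule ℂ (Fin 5 → ℂ))
    (H : Submodule ℂ (Fin 5 → ℂ)) (hH : finrank ℂ H = 4)
    (hl : ∀ i, finrank ℂ (l i) = 2)
    (hlH : ∀ i, l i ≤ H)
    (hskew : ∀ i j, i ≠ j → l i ⊓ l j = ⊥)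
    (B : (Fin 5 → ℂ) →ₗ[ℂ] (Fin 5 → ℂ) →ₗ[ℂ] ℂ)
    (hsymm : ∀ x y, B x y = B y x)
    (hnd : ∀ x ∈ H, (∀ y ∈ H, B x y = 0) → x = 0)
    (hruling : ∀ i : Fin 5, i.val < 3 → ∀ x ∈ l i, ∀ y ∈ l i, B x y = 0)
    (hsp : SpecialPosition l) :
    (∀ i : Fin 5, ∀ x ∈ l i, ∀ y ∈ l i, B x y = 0) ∨
    ((∀ i : Fin 5, 3 ≤ i.val → ∃ x ∈ l i, B x x ≠ 0) ∧
      ∃ L₁ L₂ : Submodule ℂ (Fin 5 → ℂ),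
        {L : Submodule ℂ (Fin 5 → ℂ) | finrank ℂ L = 2 ∧ ∀ i, L ⊓ l i ≠ ⊥} = {L₁, L₂}) := by
  have hdisj : ∀ i j, i ≠ j → Disjoint (l i) (l j) := fun i j h => disjoint_iff.2 (hskew i j h)
  have hHtop : H ≠ ⊤ := by
    rintro rfl
    simp [finrank_top] at hH
  obtain ⟨a, b, c, d, hF, hab, hcd, hFH⟩ := exists_isHyperbolicFrame hsymm hH hnd (hl 0) (hl 1)
    (hlH 0) (hlH 1) (hdisj 0 1 (by decide)) (hruling 0 (by decide)) (hruling 1 (by decide))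
  have hlF : ∀ k, l k ≤ span ℂ {a, b, c, d} := hFH ▸ hlH
  have hlcd : ∀ k, k ≠ 1 → Disjoint (l k) (span ℂ {c, d}) := fun k hk => hcd ▸ hdisj k 1 hk
  have hsecant : ∀ L : Submodule ℂ (Fin 5 → ℂ),
      (finrank ℂ L = 2 ∧ L ⊓ l 0 ≠ ⊥ ∧ L ⊓ l 1 ≠ ⊥ ∧ L ⊓ l 2 ≠ ⊥) ↔
        ∃ p : ℂ × ℂ, p ≠ 0 ∧ L = rulingLine a b c d p := fun L => by
    rw [← hab, ← hcd]
    exact hF.exists_eq_rulingLine_iff hsymm (hlF 2) (hl 2) (hruling 2 (by decide))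
      (hab ▸ hdisj 0 2 (by decide)) (hlcd 2 (by decide))
  have h34 : ∀ p : ℂ × ℂ, p ≠ 0 →
      (rulingLine a b c d p ⊓ l 3 ≠ ⊥ ↔ rulingLine a b c d p ⊓ l 4 ≠ ⊥) := fun p hp => by
    obtain ⟨-, h0, h1, h2⟩ := (hsecant _).2 ⟨p, hp, rfl⟩
    refine hsp.inf_ne_bot_iff_of_le hHtop hlH (hFH ▸ rulingLine_le_span p)
      (hF.finrank_rulingLine hp) fun j hj3 hj4 => ?_
    fin_cases j <;> first | assumption | exact absurd rfl ‹_›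
  have hiso34 : IsTotallyIsotropic B (l 3) ↔ IsTotallyIsotropic B (l 4) := by
    rw [← hF.forall_rulingLine_inf_ne_bot_iff hsymm (hlF 3) (hl 3) (hlcd 3 (by decide)),
      ← hF.forall_rulingLine_inf_ne_bot_iff hsymm (hlF 4) (hl 4) (hlcd 4 (by decide))]
    exact forall₂_congr h34
  have hS : ∀ L : Submodule ℂ (Fin 5 → ℂ), (finrank ℂ L = 2 ∧ ∀ i, L ⊓ l i ≠ ⊥) ↔
      ∃ p : ℂ × ℂ, p ≠ 0 ∧ L = rulingLine a b c d p ∧ L ⊓ l 3 ≠ ⊥ := by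
    refine fun L => ⟨fun ⟨hL2, hL⟩ => ?_, ?_⟩
    · obtain ⟨p, hp, rfl⟩ := (hsecant L).1 ⟨hL2, hL 0, hL 1, hL 2⟩
      exact ⟨p, hp, rfl, hL 3⟩
    · rintro ⟨p, hp, rfl, hp3⟩
      obtain ⟨hL2, h0, h1, h2⟩ := (hsecant _).2 ⟨p, hp, rfl⟩
      refine ⟨hL2, fun i => ?_⟩
      fin_cases i
      exacts [h0, h1, h2, hp3, (h34 p hp).1 hp3]
  by_cases h3 : IsTotallyIsotropic B (l 3)
  · left
    intro i
    fin_cases i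
    exacts [hruling 0 (by decide), hruling 1 (by decide), hruling 2 (by decide), h3, hiso34.1 h3]
  right
  have hQ : ∀ k, ¬IsTotallyIsotropic B (l k) → ∃ x ∈ l k, B x x ≠ 0 := fun k hk => by
    simpa [isTotallyIsotropic_iff hsymm] using hk
  obtain ⟨L₁, L₂, hL⟩ := hF.exists_rulingLines_inf_ne_bot_eq_pair (hlF 3) (hl 3)
    (hlcd 3 (by decide)) (hQ 3 h3)
  refine ⟨fun i hi => ?_, L₁, L₂, hL ▸ Set.ext hS⟩
  fin_cases i <;> first | exact hQ 3 h3 | exact hQ 4 (mt hiso34.2 h3) | simp at hi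

/-- Five pairwise disjoint lines in a 3-plane `H ⊆ ℙ⁴`, the first three of which span `H`
and lie in one ruling of the smooth quadric surface `Q ⊆ H` (cut out by a symmetric
bilinear form `B` nondegenerate on `H`, the secant variety of the first three lines), are
in special position only if either all five lines lie on `Q` (hence, being pairwise skew,
in the ruling `R₁`), or `l₄, l₅` are not contained in `Q` and the five lines possess
exactly one or exactly two common secant lines. -/
theorem five_skew_lines_with_three_on_quadric
    (l : Fin 5 → Submodule ℂ (Fin 5 → ℂ))
    (H : Submodule ℂ (Fin 5 → ℂ)) (hH : finrank ℂ H = 4)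
    (hl : ∀ i, finrank ℂ (l i) = 2)
    (hlH : ∀ i, l i ≤ H)
    (hskew : ∀ i j, i ≠ j → l i ⊓ l j = ⊥)
    (hspan : l 0 ⊔ l 1 ⊔ l 2 = H)
    (B : (Fin 5 → ℂ) →ₗ[ℂ] (Fin 5 → ℂ) →ₗ[ℂ] ℂ)
    (hsymm : ∀ x y, B x y = B y x)
    (hnd : ∀ x ∈ H, (∀ y ∈ H, B x y = 0) → x = 0)
    (hruling : ∀ i : Fin 5, i.val < 3 → ∀ x ∈ l i, ∀ y ∈ l i, B x y = 0)
    (hsp : SpecialPosition l) :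
    (∀ i : Fin 5, ∀ x ∈ l i, ∀ y ∈ l i, B x y = 0) ∨
    ((∀ i : Fin 5, 3 ≤ i.val → ∃ x ∈ l i, B x x ≠ 0) ∧
      ∃ L₁ L₂ : Submodule ℂ (Fin 5 → ℂ),
        {L : Submodule ℂ (Fin 5 → ℂ) | finrank ℂ L = 2 ∧ ∀ i, L ⊓ l i ≠ ⊥} = {L₁, L₂}) :=
  five_skew_lines_with_three_on_quadric_general l H hH hl hlH hskew B hsymm hnd hruling hsp
end
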